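/- arXiv:1908.01109 — 9 statements merged into one kernel-verified Lean document; each statement's English description precedes it below -/
import Mathlib

section
/- Every convex combination of deterministic discrete choice models is a discrete choice model, and conversely every discrete choice model on N products can be written as a convex combination of at most N·2^{N−1} + 1 deterministic discrete choice models (i.e., every DCM is a binary choice forest with at most N·2^{N−1} + 1 binary choice trees). -/
/-- A discrete choice model (DCM) on `N` products: `p i S` is the probability of choosing
alternative `i` (where `none` is the no-purchase option and `some j` is product `j`) from the
assortment `S`.  It is a map into `[0,1]` with `∑_{i ∈ S ∪ {0}} p(i,S) = 1` and `p(i,S) = 0`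
for products `i ∉ S`. -/
def IsDCM (N : ℕ) (p : Option (Fin N) → Finset (Fin N) → ℝ) : Prop :=
  (∀ i S, 0 ≤ p i S) ∧ (∀ i S, p i S ≤ 1) ∧
  (∀ S : Finset (Fin N), p none S + ∑ i ∈ S, p (some i) S = 1) ∧
  (∀ (i : Fin N) (S : Finset (Fin N)), i ∉ S → p (some i) S = 0)

/-- A deterministic DCM (equivalently, a binary choice tree): all choice probabilities
are `0` or `1`. -/
def IsDetDCM (N : ℕ) (p : Option (Fin N) → Finset (Fin N) → ℝ) : Prop :=
  ∀ i S, p i S = 0 ∨ p i S = 1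


noncomputable def cumU {N : ℕ} (p : Option (Fin N) → Finset (Fin N) → ℝ)
    (j : Fin N) (S : Finset (Fin N)) : ℝ :=
  ∑ j' ∈ S.filter (fun j' => j' ≤ j), p (some j') S

noncomputable def cumL {N : ℕ} (p : Option (Fin N) → Finset (Fin N) → ℝ)
    (j : Fin N) (S : Finset (Fin N)) : ℝ :=
  ∑ j' ∈ S.filter (fun j' => j' < j), p (some j') S

open Classical in
noncomputable def choiceFn {N : ℕ} (p : Option (Fin N) → Finset (Fin N) → ℝ)
    (x : ℝ) (S : Finset (Fin N)) : Option (Fin N) :=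
  if h : (S.filter (fun j => x < cumU p j S)).Nonempty
  then some ((S.filter (fun j => x < cumU p j S)).min' h) else none

lemma cumU_eq {N : ℕ} (p : Option (Fin N) → Finset (Fin N) → ℝ)
    {j : Fin N} {S : Finset (Fin N)} (hj : j ∈ S) :
    cumU p j S = p (some j) S + cumL p j S := by
  have hset : S.filter (fun j' => j' ≤ j) = insert j (S.filter (fun j' => j' < j)) := by
    ext k
    simp only [Finset.mem_filter, Finset.mem_insert]
    constructor
    · rintro ⟨hk, hkj⟩
      rcases lt_or_eq_of_le hkj with h | h
      · exact Or.inr ⟨hk, h⟩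
      · exact Or.inl h
    · rintro (rfl | ⟨hk, hkj⟩)
      · exact ⟨hj, le_refl _⟩
      · exact ⟨hk, le_of_lt hkj⟩
  rw [cumU, cumL, hset, Finset.sum_insert (by simp)]

lemma cumL_nonneg {N : ℕ} {p : Option (Fin N) → Finset (Fin N) → ℝ}
    (hp0 : ∀ i S, 0 ≤ p i S) (j : Fin N) (S : Finset (Fin N)) : 0 ≤ cumL p j S :=
  Finset.sum_nonneg fun _ _ => hp0 _ _

lemma cumU_nonneg {N : ℕ} {p : Option (Fin N) → Finset (Fin N) → ℝ}
    (hp0 : ∀ i S, 0 ≤ p i S) (j : Fin N) (S : Finset (Fin N)) : 0 ≤ cumU p j S :=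
  Finset.sum_nonneg fun _ _ => hp0 _ _

lemma cumU_le_cumL {N : ℕ} {p : Option (Fin N) → Finset (Fin N) → ℝ}
    (hp0 : ∀ i S, 0 ≤ p i S) {k j : Fin N} (hkj : k < j) (S : Finset (Fin N)) :
    cumU p k S ≤ cumL p j S := by
  apply Finset.sum_le_sum_of_subset_of_nonneg
  · intro x hx
    rw [Finset.mem_filter] at hx ⊢
    exact ⟨hx.1, lt_of_le_of_lt hx.2 hkj⟩
  · intro _ _ _; exact hp0 _ _

lemma cumU_le_one {N : ℕ} {p : Option (Fin N) → Finset (Fin N) → ℝ}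
    (hp0 : ∀ i S, 0 ≤ p i S)
    (hpsum : ∀ S : Finset (Fin N), p none S + ∑ i ∈ S, p (some i) S = 1)
    (j : Fin N) (S : Finset (Fin N)) : cumU p j S ≤ 1 := by
  have h1 : cumU p j S ≤ ∑ i ∈ S, p (some i) S := by
    apply Finset.sum_le_sum_of_subset_of_nonneg (Finset.filter_subset _ _)
    intro _ _ _; exact hp0 _ _
  have h2 := hpsum S
  have h3 := hp0 none S
  linarith

lemma cumL_rep {N : ℕ} (p : Option (Fin N) → Finset (Fin N) → ℝ)
    (j : Fin N) (S : Finset (Fin N)) :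
    cumL p j S = 0 ∨ ∃ j'' , j'' ∈ S ∧ j'' < j ∧ cumL p j S = cumU p j'' S := by
  by_cases h : (S.filter (fun j' => j' < j)).Nonempty
  · right
    have hmem := Finset.mem_filter.1 (Finset.max'_mem _ h)
    refine ⟨(S.filter (fun j' => j' < j)).max' h, hmem.1, hmem.2, ?_⟩
    rw [cumL, cumU]
    congr 1
    ext k
    simp only [Finset.mem_filter]
    constructor
    · rintro ⟨hk, hkj⟩
      exact ⟨hk, Finset.le_max' (S.filter (fun j' => j' < j)) k (Finset.mem_filter.2 ⟨hk, hkj⟩)⟩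
    · rintro ⟨hk, hkm⟩
      exact ⟨hk, lt_of_le_of_lt hkm hmem.2⟩
  · left
    rw [Finset.not_nonempty_iff_eq_empty] at h
    rw [cumL, h, Finset.sum_empty]

lemma choice_eq_some_iff {N : ℕ} (p : Option (Fin N) → Finset (Fin N) → ℝ)
    (x : ℝ) (S : Finset (Fin N)) (j : Fin N) :
    choiceFn p x S = some j ↔
      (j ∈ S ∧ x < cumU p j S ∧ ∀ k ∈ S, x < cumU p k S → j ≤ k) := by
  classical
  unfold choiceFn
  split_ifs with h
  · simp only [Option.some.injEq]
    constructor
    · rintro rfl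
      have hmem := Finset.min'_mem _ h
      rw [Finset.mem_filter] at hmem
      exact ⟨hmem.1, hmem.2, fun k hk hkx =>
        Finset.min'_le _ k (Finset.mem_filter.2 ⟨hk, hkx⟩)⟩
    · rintro ⟨h1, h2, h3⟩
      have hmem := Finset.min'_mem _ h
      rw [Finset.mem_filter] at hmem
      exact le_antisymm (Finset.min'_le _ j (Finset.mem_filter.2 ⟨h1, h2⟩))
        (h3 _ hmem.1 hmem.2)
  · simp only [reduceCtorEq, false_iff, not_and]
    intro h1 h2
    exact absurd ⟨j, Finset.mem_filter.2 ⟨h1, h2⟩⟩ h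

lemma choice_mem {N : ℕ} {p : Option (Fin N) → Finset (Fin N) → ℝ}
    {x : ℝ} {S : Finset (Fin N)} {j : Fin N} (h : choiceFn p x S = some j) : j ∈ S :=
  ((choice_eq_some_iff p x S j).1 h).1

lemma choice_iff {N : ℕ} {p : Option (Fin N) → Finset (Fin N) → ℝ}
    (hp0 : ∀ i S, 0 ≤ p i S) {x : ℝ} (hx : 0 ≤ x) {j : Fin N} {S : Finset (Fin N)}
    (hj : j ∈ S) :
    choiceFn p x S = some j ↔ (cumL p j S ≤ x ∧ x < cumU p j S) := by
  rw [choice_eq_some_iff]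
  constructor
  · rintro ⟨-, h2, h3⟩
    refine ⟨?_, h2⟩
    by_contra hlt
    push_neg at hlt
    rcases cumL_rep p j S with h0 | ⟨j'', hj''S, hj''j, heq⟩
    · rw [h0] at hlt; linarith
    · rw [heq] at hlt
      exact absurd (h3 j'' hj''S hlt) (not_le.2 hj''j)
  · rintro ⟨h1, h2⟩
    refine ⟨hj, h2, fun k hk hkx => ?_⟩
    by_contra hkj
    push_neg at hkj
    have := cumU_le_cumL hp0 hkj S
    linarith

lemma card_mem_filter {N : ℕ} (j : Fin N) :
    ((Finset.univ : Finset (Finset (Fin N))).filter (fun S => j ∈ S)).card = 2 ^ (N - 1) := by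
  classical
  have hbij : ((Finset.univ : Finset (Finset (Fin N))).filter (fun S => j ∈ S)).card
      = ((Finset.univ.erase j).powerset).card := by
    apply Finset.card_bij' (fun S _ => S.erase j) (fun A _ => insert j A)
    · intro S hS
      rw [Finset.mem_filter] at hS
      exact Finset.insert_erase hS.2
    · intro A hA
      rw [Finset.mem_powerset] at hA
      exact Finset.erase_insert (fun hjA => (Finset.mem_erase.1 (hA hjA)).1 rfl)
    · intro S hS
      rw [Finset.mem_powerset]
      exact Finset.erase_subset_erase j (Finset.subset_univ S)
    · intro A hA
      rw [Finset.mem_filter]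
      exact ⟨Finset.mem_univ _, Finset.mem_insert_self _ _⟩
  rw [hbij, Finset.card_powerset, Finset.card_erase_of_mem (Finset.mem_univ _),
    Finset.card_univ, Fintype.card_fin]

lemma card_pairs {N : ℕ} :
    ((Finset.univ : Finset (Fin N × Finset (Fin N))).filter (fun js => js.1 ∈ js.2)).card
      = N * 2 ^ (N - 1) := by
  classical
  rw [Finset.card_filter, ← Finset.univ_product_univ, Finset.sum_product]
  have : ∀ j : Fin N, (∑ S : Finset (Fin N), if j ∈ S then 1 else 0) = 2 ^ (N - 1) := by
    intro j
    rw [← Finset.card_filter]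
    exact card_mem_filter j
  rw [Finset.sum_congr rfl (fun j _ => this j), Finset.sum_const, Finset.card_univ,
    Fintype.card_fin, smul_eq_mul]

/-- Every convex combination of deterministic DCMs (i.e., every binary choice forest) is a DCM,
and conversely every DCM can be written as a convex combination of at most
`N·2^(N-1) + 1` deterministic DCMs (binary choice trees). -/
theorem dcm_eq_binary_choice_forest (N : ℕ) (hN : 1 ≤ N) :
    (∀ (B : ℕ) (w : Fin B → ℝ) (q : Fin B → Option (Fin N) → Finset (Fin N) → ℝ),
      (∀ b, 0 ≤ w b) → (∑ b, w b = 1) →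
      (∀ b, IsDCM N (q b)) → (∀ b, IsDetDCM N (q b)) →
      IsDCM N (fun i S => ∑ b, w b * q b i S)) ∧
    (∀ p : Option (Fin N) → Finset (Fin N) → ℝ, IsDCM N p →
      ∃ B : ℕ, B ≤ N * 2 ^ (N - 1) + 1 ∧
        ∃ (w : Fin B → ℝ) (q : Fin B → Option (Fin N) → Finset (Fin N) → ℝ),
          (∀ b, 0 ≤ w b) ∧ (∑ b, w b = 1) ∧
          (∀ b, IsDCM N (q b)) ∧ (∀ b, IsDetDCM N (q b)) ∧
          ∀ i S, p i S = ∑ b, w b * q b i S) := by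
  constructor
  · -- forward direction: convex combinations of DCMs are DCMs
    intro B w q hw hsum hq hdet
    refine ⟨?_, ?_, ?_, ?_⟩
    · intro i S
      exact Finset.sum_nonneg fun b _ => mul_nonneg (hw b) ((hq b).1 i S)
    · intro i S
      calc ∑ b, w b * q b i S ≤ ∑ b, w b * 1 :=
            Finset.sum_le_sum fun b _ =>
              mul_le_mul_of_nonneg_left ((hq b).2.1 i S) (hw b)
        _ = 1 := by simp only [mul_one]; exact hsum
    · intro S
      show (∑ b, w b * q b none S) + ∑ i ∈ S, ∑ b, w b * q b (some i) S = 1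
      rw [Finset.sum_comm, ← Finset.sum_add_distrib]
      have hb : ∀ b : Fin B, w b * q b none S + ∑ i ∈ S, w b * q b (some i) S = w b := by
        intro b
        rw [← Finset.mul_sum, ← mul_add, (hq b).2.2.1 S, mul_one]
      rw [Finset.sum_congr rfl (fun b _ => hb b), hsum]
    · intro i S hiS
      exact Finset.sum_eq_zero fun b _ => by rw [(hq b).2.2.2 i S hiS, mul_zero]
  · -- converse direction
    intro p hp
    obtain ⟨hp0, hp1, hpsum, hpnot⟩ := hp
    classical
    set T : Finset ℝ := insert 0 (insert 1
      (((Finset.univ : Finset (Fin N × Finset (Fin N))).filter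
        (fun js => js.1 ∈ js.2)).image (fun js => cumU p js.1 js.2))) with hT
    have h0T : (0 : ℝ) ∈ T := Finset.mem_insert_self _ _
    have h1T : (1 : ℝ) ∈ T := Finset.mem_insert_of_mem (Finset.mem_insert_self _ _)
    have hUmem : ∀ (j : Fin N) (S : Finset (Fin N)), j ∈ S → cumU p j S ∈ T := by
      intro j S hj
      exact Finset.mem_insert_of_mem (Finset.mem_insert_of_mem
        (Finset.mem_image.2 ⟨(j, S), Finset.mem_filter.2 ⟨Finset.mem_univ _, hj⟩, rfl⟩))
    have hLmem : ∀ (j : Fin N) (S : Finset (Fin N)), cumL p j S ∈ T := by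
      intro j S
      rcases cumL_rep p j S with h | ⟨j'', hj''S, _, heq⟩
      · rw [h]; exact h0T
      · rw [heq]; exact hUmem _ _ hj''S
    have hT01 : ∀ x ∈ T, 0 ≤ x ∧ x ≤ 1 := by
      intro x hx
      rw [hT] at hx
      simp only [Finset.mem_insert, Finset.mem_image] at hx
      rcases hx with rfl | rfl | ⟨js, _, rfl⟩
      · exact ⟨le_refl 0, zero_le_one⟩
      · exact ⟨zero_le_one, le_refl 1⟩
      · exact ⟨cumU_nonneg hp0 _ _, cumU_le_one hp0 hpsum _ _⟩
    set m := T.card with hm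
    have hmpos : 0 < m := Finset.card_pos.2 ⟨0, h0T⟩
    set e := T.orderIsoOfFin rfl with he
    set t : ℕ → ℝ := fun k => if h : k < m then (e ⟨k, h⟩ : ℝ) else 1 with ht
    have tmono : ∀ k l : ℕ, k < l → l < m → t k < t l := by
      intro k l hkl hl
      have hk : k < m := hkl.trans hl
      simp only [ht, dif_pos hk, dif_pos hl]
      exact Subtype.coe_lt_coe.2 (e.lt_iff_lt.2 (Fin.mk_lt_mk.2 hkl))
    have tmono_le : ∀ k l : ℕ, k ≤ l → l < m → t k ≤ t l := by
      intro k l hkl hl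
      rcases hkl.lt_or_eq with h | rfl
      · exact (tmono _ _ h hl).le
      · exact le_refl _
    have tmem : ∀ k, k < m → t k ∈ T := by
      intro k hk
      simp only [ht, dif_pos hk]
      exact (e ⟨k, hk⟩).2
    have tsurj : ∀ x ∈ T, ∃ k, k < m ∧ t k = x := by
      intro x hx
      refine ⟨(e.symm ⟨x, hx⟩).val, (e.symm ⟨x, hx⟩).isLt, ?_⟩
      simp only [ht, dif_pos (e.symm ⟨x, hx⟩).isLt]
      rw [dif_pos (show (e.symm ⟨x, hx⟩).val < m from (e.symm ⟨x, hx⟩).isLt)]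
      exact congrArg Subtype.val (e.apply_symm_apply ⟨x, hx⟩)
    have tlt_iff : ∀ k l, k < m → l < m → (t k < t l ↔ k < l) := by
      intro k l hk hl
      constructor
      · intro h
        by_contra hnot
        push_neg at hnot
        exact absurd h (not_lt.2 (tmono_le l k hnot hk))
      · intro h; exact tmono _ _ h hl
    have tle_iff : ∀ k l, k < m → l < m → (t k ≤ t l ↔ k ≤ l) := by
      intro k l hk hl
      constructor
      · intro h
        by_contra hnot
        push_neg at hnot
        exact absurd (tmono l k hnot hk) (not_lt.2 h)
      · intro h; exact tmono_le k l h hl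
    have t0 : t 0 = 0 := by
      obtain ⟨k, hk, hk0⟩ := tsurj 0 h0T
      have h1 : t 0 ≤ t k := tmono_le 0 k (Nat.zero_le _) hk
      have h2 : 0 ≤ t 0 := (hT01 _ (tmem 0 hmpos)).1
      linarith
    set B := m - 1 with hB
    have hBm : B < m := Nat.sub_lt hmpos one_pos
    have tB : t B = 1 := by
      obtain ⟨k, hk, hk1⟩ := tsurj 1 h1T
      have h1 : t k ≤ t B := tmono_le k B (Nat.le_pred_of_lt hk) hBm
      have h2 : t B ≤ 1 := (hT01 _ (tmem B hBm)).2
      linarith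
    have hcard : m ≤ N * 2 ^ (N - 1) + 2 := by
      have c1 := Finset.card_insert_le (0 : ℝ) (insert 1
        (((Finset.univ : Finset (Fin N × Finset (Fin N))).filter
          (fun js => js.1 ∈ js.2)).image (fun js => cumU p js.1 js.2)))
      have c2 := Finset.card_insert_le (1 : ℝ)
        ((((Finset.univ : Finset (Fin N × Finset (Fin N))).filter
          (fun js => js.1 ∈ js.2)).image (fun js => cumU p js.1 js.2)))
      have c3 := Finset.card_image_le (f := fun js : Fin N × Finset (Fin N) => cumU p js.1 js.2)
        (s := ((Finset.univ : Finset (Fin N × Finset (Fin N))).filter (fun js => js.1 ∈ js.2)))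
      have c4 := card_pairs (N := N)
      rw [hm, hT]
      omega
    refine ⟨B, by omega, ?_⟩
    refine ⟨fun b => t (b.val + 1) - t b.val,
      fun b i S => if choiceFn p (t b.val) S = i then 1 else 0, ?_, ?_, ?_, ?_, ?_⟩
    · intro b
      have h1 : b.val + 1 < m := by have := b.isLt; omega
      exact sub_nonneg.2 (tmono_le _ _ (Nat.le_succ _) h1)
    · rw [show (∑ b : Fin B, (t (b.val + 1) - t b.val))
        = ∑ k ∈ Finset.range B, (t (k + 1) - t k) from
          Fin.sum_univ_eq_sum_range (fun k => t (k + 1) - t k) B]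
      rw [Finset.sum_range_sub t B, t0, tB, sub_zero]
    · -- each q b is a DCM
      intro b
      refine ⟨?_, ?_, ?_, ?_⟩
      · intro i S; dsimp only; split <;> norm_num
      · intro i S; dsimp only; split <;> norm_num
      · intro S
        show (if choiceFn p (t b.val) S = none then (1:ℝ) else 0)
          + ∑ j ∈ S, (if choiceFn p (t b.val) S = some j then (1:ℝ) else 0) = 1
        rcases hc : choiceFn p (t b.val) S with _ | j0
        · simp
        · have hj0 : j0 ∈ S := choice_mem hc
          simp [Option.some.injEq, Finset.sum_ite_eq, hj0]
      · intro i S hiS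
        show (if choiceFn p (t b.val) S = some i then (1:ℝ) else 0) = 0
        rw [if_neg]
        intro h
        exact hiS (choice_mem h)
    · intro b i S
      show (if choiceFn p (t b.val) S = i then (1:ℝ) else 0) = 0
        ∨ (if choiceFn p (t b.val) S = i then (1:ℝ) else 0) = 1
      split
      · right; rfl
      · left; rfl
    · -- the representation identity
      have key : ∀ (j : Fin N) (S : Finset (Fin N)), j ∈ S →
          (∑ b : Fin B, (t (b.val + 1) - t b.val) *
            (if choiceFn p (t b.val) S = some j then (1:ℝ) else 0)) = p (some j) S := by
        intro j S hjS
        obtain ⟨a, ham, hta⟩ := tsurj _ (hLmem j S)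
        obtain ⟨c, hcm, htc⟩ := tsurj _ (hUmem j S hjS)
        have hLU : cumL p j S ≤ cumU p j S := by
          rw [cumU_eq p hjS]
          have := hp0 (some j) S
          linarith
        have hac : a ≤ c := by
          by_contra hca
          push_neg at hca
          have := tmono c a hca ham
          rw [hta, htc] at this
          linarith
        have hcB : c ≤ B := Nat.le_pred_of_lt hcm
        have hcond : ∀ b : Fin B,
            (choiceFn p (t b.val) S = some j) ↔ (a ≤ b.val ∧ b.val < c) := by
          intro b
          have hbm : b.val < m := by have := b.isLt; omega
          have htb0 : 0 ≤ t b.val := by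
            rw [← t0]; exact tmono_le 0 b.val (Nat.zero_le _) hbm
          rw [choice_iff hp0 htb0 hjS, ← hta, ← htc,
            tle_iff a b.val ham hbm, tlt_iff b.val c hbm hcm]
        have hsum1 : (∑ b : Fin B, (t (b.val + 1) - t b.val) *
              (if choiceFn p (t b.val) S = some j then (1:ℝ) else 0))
            = ∑ b : Fin B, (t (b.val + 1) - t b.val) *
              (if a ≤ b.val ∧ b.val < c then (1:ℝ) else 0) :=
          Finset.sum_congr rfl (fun b _ => by rw [if_congr (hcond b) rfl rfl])
        rw [hsum1]
        rw [show (∑ b : Fin B, (t (b.val + 1) - t b.val) *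
            (if a ≤ b.val ∧ b.val < c then (1:ℝ) else 0))
          = ∑ k ∈ Finset.range B, (t (k + 1) - t k) * (if a ≤ k ∧ k < c then (1:ℝ) else 0) from
            Fin.sum_univ_eq_sum_range
              (fun k => (t (k + 1) - t k) * (if a ≤ k ∧ k < c then (1:ℝ) else 0)) B]
        have hmul : ∀ k ∈ Finset.range B,
            (t (k + 1) - t k) * (if a ≤ k ∧ k < c then (1:ℝ) else 0)
              = if a ≤ k ∧ k < c then (t (k + 1) - t k) else 0 := by
          intro k _
          rw [mul_ite, mul_one, mul_zero]
        rw [Finset.sum_congr rfl hmul, ← Finset.sum_filter]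
        have hfilter : (Finset.range B).filter (fun k => a ≤ k ∧ k < c) = Finset.Ico a c := by
          ext k
          simp only [Finset.mem_filter, Finset.mem_range, Finset.mem_Ico]
          omega
        rw [hfilter, Finset.sum_Ico_eq_sum_range]
        have hshift : ∀ i ∈ Finset.range (c - a),
            t (a + i + 1) - t (a + i) = t (a + (i + 1)) - t (a + i) := by
          intro i _
          rw [Nat.add_assoc]
        rw [Finset.sum_congr rfl hshift, Finset.sum_range_sub (fun i => t (a + i)) (c - a)]
        show t (a + (c - a)) - t (a + 0) = p (some j) S
        rw [Nat.add_sub_cancel' hac, Nat.add_zero, hta, htc, cumU_eq p hjS]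
        ring
      intro i S
      rcases i with _ | j
      · -- none case
        show p none S = ∑ b : Fin B, (t (b.val + 1) - t b.val) *
          (if choiceFn p (t b.val) S = none then (1:ℝ) else 0)
        have hqsum : ∀ b : Fin B,
            (if choiceFn p (t b.val) S = none then (1:ℝ) else 0)
              = 1 - ∑ j ∈ S, (if choiceFn p (t b.val) S = some j then (1:ℝ) else 0) := by
          intro b
          rcases hc : choiceFn p (t b.val) S with _ | j0
          · simp
          · have hj0 : j0 ∈ S := choice_mem hc
            simp [Option.some.injEq, Finset.sum_ite_eq, hj0]
        have h1 : (∑ b : Fin B, (t (b.val + 1) - t b.val) *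
              (if choiceFn p (t b.val) S = none then (1:ℝ) else 0))
            = ∑ b : Fin B, (t (b.val + 1) - t b.val) *
              (1 - ∑ j ∈ S, (if choiceFn p (t b.val) S = some j then (1:ℝ) else 0)) :=
          Finset.sum_congr rfl (fun b _ => by rw [hqsum b])
        have expand : (∑ b : Fin B, (t (b.val + 1) - t b.val) *
            (1 - ∑ j ∈ S, (if choiceFn p (t b.val) S = some j then (1:ℝ) else 0)))
          = (∑ b : Fin B, (t (b.val + 1) - t b.val))
            - ∑ j ∈ S, ∑ b : Fin B, (t (b.val + 1) - t b.val) *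
                (if choiceFn p (t b.val) S = some j then (1:ℝ) else 0) := by
          rw [Finset.sum_comm (t := Finset.univ) (s := S)]
          rw [← Finset.sum_sub_distrib]
          apply Finset.sum_congr rfl
          intro b _
          rw [mul_sub, mul_one, Finset.mul_sum]
        rw [h1, expand]
        rw [show (∑ b : Fin B, (t (b.val + 1) - t b.val))
          = ∑ k ∈ Finset.range B, (t (k + 1) - t k) from
            Fin.sum_univ_eq_sum_range (fun k => t (k + 1) - t k) B]
        rw [Finset.sum_range_sub t B, t0, tB, sub_zero]
        rw [Finset.sum_congr rfl (fun j hj => key j S hj)]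
        have := hpsum S
        linarith
      · -- some case
        by_cases hjS : j ∈ S
        · show p (some j) S = ∑ b : Fin B, (t (b.val + 1) - t b.val) *
            (if choiceFn p (t b.val) S = some j then (1:ℝ) else 0)
          exact (key j S hjS).symm
        · show p (some j) S = ∑ b : Fin B, (t (b.val + 1) - t b.val) *
            (if choiceFn p (t b.val) S = some j then (1:ℝ) else 0)
          rw [hpnot j S hjS]
          symm
          apply Finset.sum_eq_zero
          intro b _
          rw [if_neg, mul_zero]
          intro h
          exact hjS (choice_mem h)
end

section
/- Fix assortments S, S' ⊆ [N] with d(S,S') = r ≥ 1, and let T₁,...,T_M be M independent uniformly distributed random subsets of [N] (assortments drawn with replacement). Then the probability that no draw T_m is a dominator of S' relative to S (i.e., that no T_m satisfies T_m ≠ S and S ⊖ T_m ⊊ S ⊖ S') equals (1 − (2^r − 2)/2^N)^M. -/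
/-!
The draws are independent, so the good tuples form a product set and the probability is the
`M`-th power of the probability that a single uniform draw `t` is not a dominator. The map
`t ↦ S ∆ t` is an involution of `Finset (Fin N)` carrying the dominators of `S'` onto the
nonempty strict subsets of `D = S ∆ S'`, of which there are `2 ^ r - 2`.
-/

open Finset

lemma card_filter_forall_pi {ι α : Type*} [Fintype ι] [DecidableEq ι] [Fintype α]
    (P : α → Prop) [DecidablePred P] [DecidablePred fun T : ι → α => ∀ i, P (T i)] :
    #{T : ι → α | ∀ i, P (T i)} = #{a | P a} ^ Fintype.card ι := by
  have hpi : ({T : ι → α | ∀ i, P (T i)} : Finset (ι → α))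
      = Fintype.piFinset fun _ => ({a | P a} : Finset α) := by
    ext T
    simp [Fintype.mem_piFinset]
  rw [hpi, Fintype.card_piFinset, prod_const, card_univ]

section Dominators

variable {α : Type*} [Fintype α] [DecidableEq α]

lemma card_filter_symmDiff_ssubset (S D : Finset α) :
    #{t : Finset α | symmDiff S t ⊂ D} = 2 ^ #D - 1 := by
  rw [← card_Iio_finset]
  exact card_equiv (symmDiff_right_involutive S).toPerm fun t => by simp

lemma card_filter_ne_symmDiff_ssubset_add_two {S D : Finset α} (hD : D.Nonempty) :
    #{t : Finset α | t ≠ S ∧ symmDiff S t ⊂ D} + 2 = 2 ^ #D := by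
  have hS : S ∈ ({t : Finset α | symmDiff S t ⊂ D} : Finset (Finset α)) := by
    simpa [nonempty_iff_ne_empty, ssubset_iff_subset_ne, eq_comm] using hD
  have hpow : 1 ≤ 2 ^ #D - 1 :=
    Nat.le_sub_of_add_le (Nat.pow_le_pow_right two_pos hD.card_pos)
  have herase : ({t : Finset α | t ≠ S ∧ symmDiff S t ⊂ D} : Finset (Finset α))
      = ({t : Finset α | symmDiff S t ⊂ D} : Finset (Finset α)).erase S := by
    ext t
    simp
  rw [herase, card_erase_of_mem hS, card_filter_symmDiff_ssubset]
  omega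

end Dominators

/-- Fix assortments `S, S' ⊆ [N]` with `d(S,S') = r ≥ 1`, and draw `M` assortments
`T 0, …, T (M-1)` independently and uniformly at random from all subsets of `[N]`
(drawing with replacement, i.e., the tuple `T` is uniform over `(2^[N])^M`).  The probability
that no draw `T m` is a dominator of `S'` relative to `S` (i.e., no `T m` satisfies
`T m ≠ S` and `S ⊖ T m ⊊ S ⊖ S'`) equals `(1 - (2^r - 2)/2^N)^M`. -/
theorem prob_no_dominator_drawn (N r M : ℕ) (hr : 1 ≤ r) (S S' : Finset (Fin N))
    (hd : (symmDiff S S').card = r) :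
    (((Finset.univ : Finset (Fin M → Finset (Fin N))).filter
        (fun T => ∀ m : Fin M, ¬ (T m ≠ S ∧ symmDiff S (T m) ⊂ symmDiff S S'))).card : ℝ)
      / ((2 ^ N : ℝ) ^ M)
      = (1 - ((2 : ℝ) ^ r - 2) / 2 ^ N) ^ M := by
  set D := symmDiff S S'
  have hD : D.Nonempty := card_pos.mp (hd ▸ hr)
  have hdom : #{t : Finset (Fin N) | t ≠ S ∧ symmDiff S t ⊂ D} + 2 = 2 ^ r :=
    hd ▸ card_filter_ne_symmDiff_ssubset_add_two hD
  have hsplit := card_filter_add_card_filter_not (s := univ)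
    fun t : Finset (Fin N) => t ≠ S ∧ symmDiff S t ⊂ D
  rw [card_univ, Fintype.card_finset, Fintype.card_fin] at hsplit
  have hgood : (#{t : Finset (Fin N) | ¬(t ≠ S ∧ symmDiff S t ⊂ D)} : ℝ)
      = 2 ^ N - (2 ^ r - 2) := by
    have hsplit' := congrArg (Nat.cast (R := ℝ)) hsplit
    have hdom' := congrArg (Nat.cast (R := ℝ)) hdom
    push_cast at hsplit' hdom'
    linarith
  rw [card_filter_forall_pi (fun t => ¬(t ≠ S ∧ symmDiff S t ⊂ D)), Fintype.card_fin,
    Nat.cast_pow, ← div_pow, hgood]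
  field_simp
end

section
/- Let N ≥ 3 and M = ⌈2^N · ⌈log₂ N⌉ · (ln N)/(N−2)⌉, and let the training family T consist of M assortments drawn independently and uniformly (with replacement) from all subsets of [N]. Then for any fixed assortment S ⊆ [N], with probability at least 1 − 1/(⌈log₂ N⌉)!, every potential nearest neighbor S' ∈ T of S satisfies d(S,S') ≤ ⌈log₂ N⌉ − 1. -/
/-- `S₁` is a potential nearest neighbor (PNN) of `S` among the drawn family `T 0, …, T (M-1)`
if no member of the family strictly dominates it: no `m'` has `S ⊖ T m' ⊊ S ⊖ S₁`. -/
def IsPNN {N M : ℕ} (S : Finset (Fin N)) (T : Fin M → Finset (Fin N)) (m : Fin M) : Prop :=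
  ∀ m' : Fin M, ¬ symmDiff S (T m') ⊂ symmDiff S (T m)

open scoped Classical

lemma aux_card_ssubset (N : ℕ) (S D : Finset (Fin N)) :
    (Finset.univ.filter (fun X : Finset (Fin N) => symmDiff S X ⊂ D)).card
      = 2 ^ D.card - 1 := by
  have h : (Finset.univ.filter (fun X : Finset (Fin N) => symmDiff S X ⊂ D)).card
      = (D.powerset.erase D).card := by
    apply Finset.card_nbij' (fun X => symmDiff S X) (fun A => symmDiff S A)
    · intro X hX
      simp only [Finset.mem_coe, Finset.mem_filter] at hX
      rcases hX.2 with h2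
      rw [Finset.mem_coe, Finset.mem_erase, Finset.mem_powerset]
      exact ⟨h2.ne, h2.subset⟩
    · intro A hA
      rw [Finset.mem_coe, Finset.mem_erase, Finset.mem_powerset] at hA
      simp only [Finset.mem_coe, Finset.mem_filter, Finset.mem_univ, true_and]
      have hcan : symmDiff S (symmDiff S A) = A := symmDiff_symmDiff_cancel_left S A
      rw [hcan]
      exact lt_of_le_of_ne hA.2 hA.1
    · intro X _; exact symmDiff_symmDiff_cancel_left S X
    · intro A _; exact symmDiff_symmDiff_cancel_left S A
  rw [h, Finset.card_erase_of_mem (Finset.mem_powerset_self D), Finset.card_powerset]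

/-- Let `N ≥ 3` and `M = ⌈2^N · ⌈log₂ N⌉ · (ln N)/(N-2)⌉`, and draw `M` assortments
independently and uniformly (with replacement) from all subsets of `[N]`.  Then for any fixed
assortment `S`, with probability at least `1 - 1/(⌈log₂ N⌉)!`, every potential nearest neighbor
`S'` of `S` in the drawn family satisfies `d(S,S') ≤ ⌈log₂ N⌉ - 1`. -/
theorem pnn_distance_bound (N : ℕ) (hN : 3 ≤ N) (S : Finset (Fin N)) (M : ℕ)
    (hM : M = ⌈((2 : ℝ) ^ N * (Nat.clog 2 N : ℝ) * Real.log N) / ((N : ℝ) - 2)⌉₊) :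
    1 - 1 / (Nat.factorial (Nat.clog 2 N) : ℝ) ≤
      (((Finset.univ : Finset (Fin M → Finset (Fin N))).filter
          (fun T => ∀ m : Fin M, IsPNN S T m →
            (symmDiff S (T m)).card ≤ Nat.clog 2 N - 1)).card : ℝ)
        / ((2 ^ N : ℝ) ^ M) := by
  set L := Nat.clog 2 N with hL
  have hL1 : 1 ≤ L := Nat.clog_pos (by norm_num) (by omega)
  have hNle : N ≤ 2 ^ L := Nat.le_pow_clog (by norm_num) N
  have hLN : L ≤ N := by
    have h1 : 2 ^ (L - 1) < N := Nat.pow_pred_clog_lt_self (by norm_num) (by omega)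
    have h2 : N < 2 ^ N := Nat.lt_two_pow_self
    have := Nat.pow_lt_pow_iff_right (a := 2) (by norm_num) |>.mp (h1.trans h2)
    omega
  have hpowle : 2 ^ L - 1 ≤ 2 ^ N := by
    have := Nat.pow_le_pow_right (n := 2) (by norm_num) hLN
    omega
  -- the per-coordinate "good for D" set
  set G : Finset (Fin N) → Finset (Finset (Fin N)) :=
    fun D => Finset.univ.filter (fun X : Finset (Fin N) => ¬ symmDiff S X ⊂ D) with hG
  have hGcard : ∀ D ∈ Finset.powersetCard L (Finset.univ : Finset (Fin N)),
      (G D).card = 2 ^ N - (2 ^ L - 1) := by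
    intro D hD
    rw [Finset.mem_powersetCard] at hD
    have hsplit : (Finset.univ.filter (fun X : Finset (Fin N) => symmDiff S X ⊂ D)).card
        + (G D).card = 2 ^ N := by
      have h0 := Finset.card_filter_add_card_filter_not
        (s := (Finset.univ : Finset (Finset (Fin N))))
        (p := fun X => symmDiff S X ⊂ D)
      simpa [hG, Finset.card_univ, Fintype.card_finset] using h0
    rw [aux_card_ssubset N S D, hD.2] at hsplit
    omega
  -- the bad event is covered by the union over D of size L
  set Bad : Finset (Fin M → Finset (Fin N)) :=
    Finset.univ.filter (fun T => ¬ ∀ m : Fin M, IsPNN S T m →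
      (symmDiff S (T m)).card ≤ L - 1) with hBad
  have hcover : Bad ⊆ (Finset.powersetCard L (Finset.univ : Finset (Fin N))).biUnion
      (fun D => Fintype.piFinset (fun _ : Fin M => G D)) := by
    intro T hT
    rw [hBad, Finset.mem_filter] at hT
    push_neg at hT
    obtain ⟨m, hPNN, hcard⟩ := hT.2
    have hLle : L ≤ (symmDiff S (T m)).card := by omega
    obtain ⟨D, hDsub, hDcard⟩ := Finset.exists_subset_card_eq hLle
    rw [Finset.mem_biUnion]
    refine ⟨D, ?_, ?_⟩
    · rw [Finset.mem_powersetCard]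
      exact ⟨Finset.subset_univ D, hDcard⟩
    · rw [Fintype.mem_piFinset]
      intro m'
      rw [hG, Finset.mem_filter]
      refine ⟨Finset.mem_univ _, fun hss => ?_⟩
      exact hPNN m' (lt_of_lt_of_le hss hDsub)
  -- count the bad event
  have hbadcard : (Bad.card : ℝ) ≤ (N.choose L : ℝ) * ((2 ^ N - (2 ^ L - 1) : ℕ) : ℝ) ^ M := by
    have h1 := Finset.card_le_card hcover
    have h2 := Finset.card_biUnion_le
      (s := Finset.powersetCard L (Finset.univ : Finset (Fin N)))
      (t := fun D => Fintype.piFinset (fun _ : Fin M => G D))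
    have h3 : ∀ D ∈ Finset.powersetCard L (Finset.univ : Finset (Fin N)),
        (Fintype.piFinset (fun _ : Fin M => G D)).card = (2 ^ N - (2 ^ L - 1)) ^ M := by
      intro D hD
      rw [Fintype.card_piFinset]
      simp [hGcard D hD]
    have h4 : Bad.card ≤ (N.choose L) * (2 ^ N - (2 ^ L - 1)) ^ M := by
      calc Bad.card ≤ _ := h1
        _ ≤ _ := h2
        _ = (N.choose L) * (2 ^ N - (2 ^ L - 1)) ^ M := by
            rw [Finset.sum_congr rfl h3, Finset.sum_const, smul_eq_mul,
              Finset.card_powersetCard, Finset.card_univ, Fintype.card_fin]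
    calc (Bad.card : ℝ) ≤ ((N.choose L * (2 ^ N - (2 ^ L - 1)) ^ M : ℕ) : ℝ) := by
          exact_mod_cast h4
      _ = (N.choose L : ℝ) * ((2 ^ N - (2 ^ L - 1) : ℕ) : ℝ) ^ M := by push_cast; ring
  -- real analysis part
  have hNR : (3:ℝ) ≤ (N:ℝ) := by exact_mod_cast hN
  have hNpos : (0:ℝ) < N := by linarith
  have h2Npos : (0:ℝ) < (2:ℝ) ^ N := by positivity
  have hlog : 0 ≤ Real.log N := Real.log_nonneg (by linarith)
  have hLfac : (0:ℝ) < (Nat.factorial L : ℝ) := by exact_mod_cast L.factorial_pos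
  have hNLpos : (0:ℝ) < (N:ℝ) ^ L := by positivity
  set p : ℝ := ((2:ℝ) ^ L - 1) / 2 ^ N with hp
  have h2L1 : (1:ℝ) ≤ 2 ^ L := one_le_pow₀ (by norm_num)
  have hp0 : 0 ≤ p := by apply div_nonneg _ (le_of_lt h2Npos); linarith
  have hpowleR : (2:ℝ) ^ L ≤ 2 ^ N :=
    pow_le_pow_right₀ (by norm_num) hLN
  have h1p : 0 ≤ 1 - p := by
    rw [hp, sub_nonneg, div_le_one h2Npos]; linarith
  have hqcast : ((2 ^ N - (2 ^ L - 1) : ℕ) : ℝ) = 2 ^ N * (1 - p) := by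
    rw [Nat.cast_sub hpowle, Nat.cast_sub Nat.one_le_two_pow]
    push_cast
    rw [hp]
    field_simp
  -- lower bound on p * M
  have hNm2 : (0:ℝ) < (N:ℝ) - 2 := by linarith
  have hMge : (2:ℝ) ^ N * (L:ℝ) * Real.log N / ((N:ℝ) - 2) ≤ (M:ℝ) := by
    rw [hM]; exact Nat.le_ceil _
  have hNle2L : (N:ℝ) ≤ 2 ^ L := by exact_mod_cast hNle
  have hpge : ((N:ℝ) - 1) / 2 ^ N ≤ p := by
    rw [hp]
    gcongr
  have hpM : (L:ℝ) * Real.log N ≤ p * M := by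
    have hxnn : 0 ≤ (2:ℝ) ^ N * (L:ℝ) * Real.log N / ((N:ℝ) - 2) := by positivity
    have h1 : ((N:ℝ) - 1) / 2 ^ N * ((2:ℝ) ^ N * (L:ℝ) * Real.log N / ((N:ℝ) - 2))
        ≤ p * M := by
      apply mul_le_mul hpge hMge hxnn hp0
    have h2 : ((N:ℝ) - 1) / 2 ^ N * ((2:ℝ) ^ N * (L:ℝ) * Real.log N / ((N:ℝ) - 2))
        = (L:ℝ) * Real.log N * (((N:ℝ) - 1) / ((N:ℝ) - 2)) := by
      field_simp
    have h3 : (L:ℝ) * Real.log N ≤ (L:ℝ) * Real.log N * (((N:ℝ) - 1) / ((N:ℝ) - 2)) := by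
      apply le_mul_of_one_le_right (by positivity)
      rw [le_div_iff₀ hNm2]
      linarith
    linarith
  -- (1-p)^M ≤ N^(-L)
  have hexp1 : (1 - p) ≤ Real.exp (-p) := by
    have := Real.add_one_le_exp (-p); linarith
  have hpowM : (1 - p) ^ M ≤ ((N:ℝ) ^ L)⁻¹ := by
    calc (1 - p) ^ M ≤ Real.exp (-p) ^ M := pow_le_pow_left₀ h1p hexp1 M
      _ = Real.exp ((M:ℝ) * (-p)) := (Real.exp_nat_mul _ M).symm
      _ ≤ Real.exp (-((L:ℝ) * Real.log N)) := by
          apply Real.exp_le_exp.mpr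
          have : p * M = (M:ℝ) * p := by ring
          nlinarith [hpM]
      _ = ((N:ℝ) ^ L)⁻¹ := by
          rw [Real.exp_neg, Real.exp_nat_mul, Real.exp_log hNpos]
  -- combine into the key bound
  have hkey : (Bad.card : ℝ) ≤ ((2:ℝ) ^ N) ^ M / (Nat.factorial L : ℝ) := by
    have hchoose : (N.choose L : ℝ) ≤ (N:ℝ) ^ L / (Nat.factorial L : ℝ) := by
      have := Nat.choose_le_pow_div (α := ℝ) L N
      simpa using this
    have hqM : ((2 ^ N - (2 ^ L - 1) : ℕ) : ℝ) ^ M ≤ ((2:ℝ) ^ N) ^ M * ((N:ℝ) ^ L)⁻¹ := by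
      rw [hqcast, mul_pow]
      apply mul_le_mul_of_nonneg_left hpowM (by positivity)
    calc (Bad.card : ℝ) ≤ (N.choose L : ℝ) * ((2 ^ N - (2 ^ L - 1) : ℕ) : ℝ) ^ M := hbadcard
      _ ≤ ((N:ℝ) ^ L / (Nat.factorial L : ℝ)) * (((2:ℝ) ^ N) ^ M * ((N:ℝ) ^ L)⁻¹) := by
          apply mul_le_mul hchoose hqM (by positivity) (by positivity)
      _ = ((2:ℝ) ^ N) ^ M / (Nat.factorial L : ℝ) := by
          field_simp
  -- final assembly
  have hGB : ((Finset.univ : Finset (Fin M → Finset (Fin N))).filter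
        (fun T => ∀ m : Fin M, IsPNN S T m →
          (symmDiff S (T m)).card ≤ L - 1)).card + Bad.card = (2 ^ N) ^ M := by
    have h0 := Finset.card_filter_add_card_filter_not
      (s := (Finset.univ : Finset (Fin M → Finset (Fin N))))
      (p := fun T => ∀ m : Fin M, IsPNN S T m → (symmDiff S (T m)).card ≤ L - 1)
    simpa [hBad, Finset.card_univ, Fintype.card_fun, Fintype.card_finset] using h0
  have hGBR : (((Finset.univ : Finset (Fin M → Finset (Fin N))).filter
        (fun T => ∀ m : Fin M, IsPNN S T m →
          (symmDiff S (T m)).card ≤ L - 1)).card : ℝ) + (Bad.card : ℝ)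
        = ((2:ℝ) ^ N) ^ M := by
    exact_mod_cast hGB
  rw [le_div_iff₀ (by positivity)]
  have hexpand : (1 - 1 / (Nat.factorial L : ℝ)) * ((2:ℝ) ^ N) ^ M
      = ((2:ℝ) ^ N) ^ M - ((2:ℝ) ^ N) ^ M / (Nat.factorial L : ℝ) := by
    field_simp
  linarith
end

section
/- For every integer N ≥ 3, the sum ∑_{r=⌈log₂ N⌉}^{N} C(N,r) · N^{−(2^r−2)·⌈log₂ N⌉/(N−2)} is strictly less than 1/(⌈log₂ N⌉)!, where C(N,r) is the binomial coefficient. -/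
private lemma my_geom_le (x : ℝ) (h0 : 0 ≤ x) (h1 : x < 1) (M : ℕ) :
    ∑ i ∈ Finset.range M, x^i ≤ (1-x)⁻¹ := by
  rw [geom_sum_eq (by linarith) M, div_le_iff_of_neg (by linarith : x - 1 < 0)]
  have hne : (1:ℝ) - x ≠ 0 := by linarith
  have h2 : (1-x)⁻¹ * (x-1) = -1 := by field_simp; ring
  rw [h2]
  nlinarith [pow_nonneg h0 M]

private lemma desc_bound (N k : ℕ) (hk : 3 ≤ k) : N.descFactorial k ≤ N^(k-1) * (N - 2) := by
  rw [Nat.descFactorial_eq_prod_range]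
  have h2 : (2:ℕ) ∈ Finset.range k := by simp; omega
  rw [← Finset.mul_prod_erase _ _ h2]
  calc (N - 2) * ∏ i ∈ (Finset.range k).erase 2, (N - i)
      ≤ (N - 2) * ∏ i ∈ (Finset.range k).erase 2, N :=
        Nat.mul_le_mul_left _ (Finset.prod_le_prod' (fun i _ => Nat.sub_le N i))
    _ = (N - 2) * N ^ ((Finset.range k).erase 2).card := by rw [Finset.prod_const]
    _ = N^(k-1) * (N-2) := by
        rw [Finset.card_erase_of_mem h2, Finset.card_range, mul_comm]

private lemma choose_k_bound (N k : ℕ) (hk : 3 ≤ k) :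
    Nat.factorial k * N.choose k ≤ N^(k-1) * (N-2) :=
  (Nat.descFactorial_eq_factorial_mul_choose N k ▸ desc_bound N k hk)

private lemma choose_r_bound (N k r : ℕ) (hkr : k ≤ r) : N.choose r * Nat.factorial k ≤ N^r := by
  calc N.choose r * Nat.factorial k ≤ N.choose r * Nat.factorial r :=
        Nat.mul_le_mul_left _ (Nat.factorial_le hkr)
    _ = N.descFactorial r := by rw [Nat.descFactorial_eq_factorial_mul_choose, mul_comm]
    _ ≤ N^r := Nat.descFactorial_le_pow N r

private lemma exp_tail (N k s : ℕ) (hN : 5 ≤ N) (hk : 3 ≤ k) (hs : 1 ≤ s) (hpow : N ≤ 2^k) :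
    ((k:ℝ) + s) + s + 1 ≤ ((2:ℝ)^(k+s) - 2) * k / ((N:ℝ) - 2) := by
  have hn2 : (0:ℝ) < (N:ℝ) - 2 := by
    have : (5:ℝ) ≤ N := by exact_mod_cast hN
    linarith
  rw [le_div_iff₀ hn2]
  have hA : (N:ℝ) ≤ 2^k := by
    have : ((N:ℕ):ℝ) ≤ ((2^k : ℕ):ℝ) := Nat.cast_le.2 hpow
    push_cast at this; linarith
  have hs2 : (s:ℝ) + 1 ≤ 2^s := by
    have h := Nat.lt_two_pow_self (n := s)
    have : ((s+1 : ℕ):ℝ) ≤ ((2^s : ℕ):ℝ) := Nat.cast_le.2 h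
    push_cast at this; linarith
  have hk3 : (3:ℝ) ≤ k := by exact_mod_cast hk
  have hs1 : (1:ℝ) ≤ s := by exact_mod_cast hs
  have hpa : (2:ℝ)^(k+s) = 2^k * 2^s := pow_add 2 k s
  have h2s1 : (1:ℝ) ≤ 2^s := by linarith
  have e1 : ((N:ℝ) - 2) * 2^s ≤ 2^k * 2^s - 2 := by nlinarith
  have e2 : (k:ℝ) + 2*s + 1 ≤ 2^s * k := by nlinarith
  rw [hpa]
  nlinarith [mul_le_mul_of_nonneg_right e2 hn2.le,
    mul_le_mul_of_nonneg_right e1 (by linarith : (0:ℝ) ≤ k)]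

private lemma tail_term (N k r : ℕ) (hN : 5 ≤ N) (hk : 3 ≤ k) (hr : k < r) (hpow : N ≤ 2^k) :
    (N.choose r : ℝ) * (N:ℝ) ^ (-(((2:ℝ)^r - 2) * (k:ℝ) / ((N:ℝ) - 2)))
      ≤ ((1:ℝ)/N)^(r - k + 1) / (Nat.factorial k : ℝ) := by
  have hNpos : (0:ℝ) < N := by positivity
  have h1N : (1:ℝ) ≤ N := by exact_mod_cast (by omega : 1 ≤ N)
  set s := r - k with hsdef
  have hrs : r = k + s := by omega
  have hs : 1 ≤ s := by omega
  have hexp : ((r:ℝ) + s + 1) ≤ ((2:ℝ)^r - 2) * (k:ℝ) / ((N:ℝ) - 2) := by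
    rw [hrs]; push_cast
    exact exp_tail N k s hN hk hs hpow
  have h2 : (N:ℝ) ^ (-(((2:ℝ)^r - 2) * (k:ℝ) / ((N:ℝ) - 2))) ≤ ((N:ℝ)^(r+s+1))⁻¹ := by
    rw [← Real.rpow_natCast (N:ℝ) (r+s+1), ← Real.rpow_neg hNpos.le]
    calc (N:ℝ) ^ (-(((2:ℝ)^r - 2) * (k:ℝ) / ((N:ℝ) - 2)))
        ≤ (N:ℝ) ^ (-((r:ℝ) + s + 1)) :=
          Real.rpow_le_rpow_of_exponent_le h1N (neg_le_neg hexp)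
      _ = (N:ℝ) ^ (-(((r+s+1:ℕ):ℝ))) := by push_cast; ring_nf
  have hC : (N.choose r : ℝ) ≤ (N:ℝ)^r / (Nat.factorial k : ℝ) := by
    rw [le_div_iff₀ (by positivity : (0:ℝ) < (Nat.factorial k : ℝ))]
    exact_mod_cast choose_r_bound N k r hr.le
  calc (N.choose r : ℝ) * (N:ℝ) ^ (-(((2:ℝ)^r - 2) * (k:ℝ) / ((N:ℝ) - 2)))
      ≤ (N.choose r : ℝ) * ((N:ℝ)^(r+s+1))⁻¹ := mul_le_mul_of_nonneg_left h2 (by positivity)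
    _ ≤ ((N:ℝ)^r / (Nat.factorial k : ℝ)) * ((N:ℝ)^(r+s+1))⁻¹ :=
        mul_le_mul_of_nonneg_right hC (by positivity)
    _ = ((1:ℝ)/N)^(r - k + 1) / (Nat.factorial k : ℝ) := by
        rw [show r - k + 1 = s + 1 from rfl]
        have hx : (N:ℝ)^(r+s+1) = (N:ℝ)^r * (N:ℝ)^(s+1) := by ring
        rw [hx]
        have h1 : (N:ℝ)^r ≠ 0 := by positivity
        have h2' : (N:ℝ) ≠ 0 := by positivity
        have h3 : (Nat.factorial k : ℝ) ≠ 0 := by positivity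
        rw [div_pow, one_pow]
        field_simp

private lemma main_term (N k : ℕ) (hN : 5 ≤ N) (hk : 3 ≤ k) (hpow : N ≤ 2^k) :
    (N.choose k : ℝ) * (N:ℝ) ^ (-(((2:ℝ)^k - 2) * (k:ℝ) / ((N:ℝ) - 2)))
      ≤ ((N:ℝ) - 2) / ((N:ℝ) * (Nat.factorial k : ℝ)) := by
  have hNpos : (0:ℝ) < N := by positivity
  have hN5 : (5:ℝ) ≤ N := by exact_mod_cast hN
  have h1N : (1:ℝ) ≤ N := by linarith
  have hn2 : (0:ℝ) < (N:ℝ) - 2 := by linarith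
  have hA : (N:ℝ) ≤ 2^k := by
    have : ((N:ℕ):ℝ) ≤ ((2^k : ℕ):ℝ) := Nat.cast_le.2 hpow
    push_cast at this; linarith
  have hk3 : (0:ℝ) ≤ k := by positivity
  have hexp : ((k:ℕ):ℝ) ≤ ((2:ℝ)^k - 2) * (k:ℝ) / ((N:ℝ) - 2) := by
    rw [le_div_iff₀ hn2]
    nlinarith
  have h2 : (N:ℝ) ^ (-(((2:ℝ)^k - 2) * (k:ℝ) / ((N:ℝ) - 2))) ≤ ((N:ℝ)^k)⁻¹ := by
    rw [← Real.rpow_natCast (N:ℝ) k, ← Real.rpow_neg hNpos.le]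
    exact Real.rpow_le_rpow_of_exponent_le h1N (neg_le_neg hexp)
  have hC : (N.choose k : ℝ) ≤ (N:ℝ)^(k-1) * ((N:ℝ) - 2) / (Nat.factorial k : ℝ) := by
    rw [le_div_iff₀ (by positivity : (0:ℝ) < (Nat.factorial k : ℝ))]
    have := choose_k_bound N k hk
    have hcast : ((Nat.factorial k : ℕ):ℝ) * (N.choose k : ℝ) ≤ ((N:ℝ))^(k-1) * (((N - 2 : ℕ)):ℝ) := by
      exact_mod_cast this
    rw [Nat.cast_sub (by omega : 2 ≤ N)] at hcast
    push_cast at hcast ⊢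
    linarith
  calc (N.choose k : ℝ) * (N:ℝ) ^ (-(((2:ℝ)^k - 2) * (k:ℝ) / ((N:ℝ) - 2)))
      ≤ (N.choose k : ℝ) * ((N:ℝ)^k)⁻¹ := mul_le_mul_of_nonneg_left h2 (by positivity)
    _ ≤ ((N:ℝ)^(k-1) * ((N:ℝ) - 2) / (Nat.factorial k : ℝ)) * ((N:ℝ)^k)⁻¹ :=
        mul_le_mul_of_nonneg_right hC (by positivity)
    _ = ((N:ℝ) - 2) / ((N:ℝ) * (Nat.factorial k : ℝ)) := by
        rw [show (N:ℝ)^k = (N:ℝ)^(k-1) * N by rw [← pow_succ]; congr 1; omega]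
        have h1 : (N:ℝ)^(k-1) ≠ 0 := by positivity
        have h2' : (N:ℝ) ≠ 0 := by positivity
        have h3 : (Nat.factorial k : ℝ) ≠ 0 := by positivity
        field_simp

private lemma big_case (N : ℕ) (hN : 5 ≤ N) :
    ∑ r ∈ Finset.Icc (Nat.clog 2 N) N,
        (N.choose r : ℝ) *
          (N : ℝ) ^ (-(((2 : ℝ) ^ r - 2) * (Nat.clog 2 N : ℝ) / ((N : ℝ) - 2)))
      < 1 / (Nat.factorial (Nat.clog 2 N) : ℝ) := by
  set k := Nat.clog 2 N with hkdef
  have hk : 3 ≤ k := (Nat.lt_clog_iff_pow_lt one_lt_two).2 (by omega)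
  have hpow : N ≤ 2^k := Nat.le_pow_clog one_lt_two N
  have hkN : k ≤ N := (Nat.clog_le_iff_le_pow one_lt_two).2 (Nat.lt_two_pow_self (n := N)).le
  have hNpos : (0:ℝ) < N := by positivity
  have hN5 : (5:ℝ) ≤ N := by exact_mod_cast hN
  have hKpos : (0:ℝ) < (Nat.factorial k : ℝ) := by positivity
  have hsplit : Finset.Icc k N = insert k (Finset.Ioc k N) := (Finset.Ioc_insert_left hkN).symm
  rw [hsplit, Finset.sum_insert (by simp)]
  -- tail bound
  have htail : ∑ r ∈ Finset.Ioc k N,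
      (N.choose r : ℝ) * (N : ℝ) ^ (-(((2 : ℝ) ^ r - 2) * (k : ℝ) / ((N : ℝ) - 2)))
      ≤ ((1-(1:ℝ)/N)⁻¹ * ((1:ℝ)/N)^2) * (1 / (Nat.factorial k : ℝ)) := by
    have step1 : ∑ r ∈ Finset.Ioc k N,
        (N.choose r : ℝ) * (N : ℝ) ^ (-(((2 : ℝ) ^ r - 2) * (k : ℝ) / ((N : ℝ) - 2)))
        ≤ ∑ r ∈ Finset.Ioc k N, ((1:ℝ)/N)^(r - k + 1) / (Nat.factorial k : ℝ) :=
      Finset.sum_le_sum (fun r hr => tail_term N k r hN hk (Finset.mem_Ioc.1 hr).1 hpow)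
    refine step1.trans ?_
    have hIoc : Finset.Ioc k N = Finset.Ico (k+1) (N+1) := by
      rw [Finset.Ico_add_one_right_eq_Icc, Finset.Icc_add_one_left_eq_Ioc]
    rw [hIoc, Finset.sum_Ico_eq_sum_range]
    have hre : ∀ i ∈ Finset.range (N + 1 - (k+1)),
        ((1:ℝ)/N)^(k+1+i - k + 1) / (Nat.factorial k : ℝ)
          = ((1:ℝ)/N)^i * (((1:ℝ)/N)^2 / (Nat.factorial k : ℝ)) := by
      intro i _
      rw [show k+1+i - k + 1 = i + 2 by omega, pow_add]
      ring
    rw [Finset.sum_congr rfl hre, ← Finset.sum_mul]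
    have hx0 : (0:ℝ) ≤ 1/N := by positivity
    have hx1 : (1:ℝ)/N < 1 := by
      rw [div_lt_one hNpos]; linarith
    have := my_geom_le ((1:ℝ)/N) hx0 hx1 (N + 1 - (k+1))
    calc (∑ i ∈ Finset.range (N + 1 - (k+1)), ((1:ℝ)/N)^i) * (((1:ℝ)/N)^2 / (Nat.factorial k : ℝ))
        ≤ (1-(1:ℝ)/N)⁻¹ * (((1:ℝ)/N)^2 / (Nat.factorial k : ℝ)) :=
          mul_le_mul_of_nonneg_right this (by positivity)
      _ = ((1-(1:ℝ)/N)⁻¹ * ((1:ℝ)/N)^2) * (1 / (Nat.factorial k : ℝ)) := by ring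
  have hmain := main_term N k hN hk hpow
  have hnum : ((N:ℝ) - 2) / (N:ℝ) + (1-(1:ℝ)/N)⁻¹ * ((1:ℝ)/N)^2 < 1 := by
    have hne : (N:ℝ) ≠ 0 := by positivity
    have hne1 : (N:ℝ) - 1 ≠ 0 := by nlinarith
    have e : (1-(1:ℝ)/N)⁻¹ = (N:ℝ)/((N:ℝ)-1) := by
      rw [show (1:ℝ) - 1/N = ((N:ℝ)-1)/N by field_simp, inv_div]
    rw [e, ← sub_pos]
    have expand : 1 - (((N:ℝ) - 2) / (N:ℝ) + (N:ℝ)/((N:ℝ)-1) * ((1:ℝ)/N)^2)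
        = (2*(N:ℝ) - 3)/((N:ℝ)*((N:ℝ)-1)) := by
      field_simp
      ring
    rw [expand]
    apply div_pos (by linarith) (by nlinarith)
  calc (N.choose k : ℝ) * (N : ℝ) ^ (-(((2 : ℝ) ^ k - 2) * (k : ℝ) / ((N : ℝ) - 2)))
        + ∑ r ∈ Finset.Ioc k N,
          (N.choose r : ℝ) * (N : ℝ) ^ (-(((2 : ℝ) ^ r - 2) * (k : ℝ) / ((N : ℝ) - 2)))
      ≤ ((N:ℝ) - 2) / ((N:ℝ) * (Nat.factorial k : ℝ))
        + ((1-(1:ℝ)/N)⁻¹ * ((1:ℝ)/N)^2) * (1 / (Nat.factorial k : ℝ)) :=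
        add_le_add hmain htail
    _ = (((N:ℝ) - 2) / (N:ℝ) + (1-(1:ℝ)/N)⁻¹ * ((1:ℝ)/N)^2) * (1 / (Nat.factorial k : ℝ)) := by
        rw [div_mul_eq_div_mul_one_div]
        ring
    _ < 1 * (1 / (Nat.factorial k : ℝ)) :=
        mul_lt_mul_of_pos_right hnum (by positivity)
    _ = 1 / (Nat.factorial k : ℝ) := one_mul _

/-- Key analytic estimate: for every integer `N ≥ 3`,
`∑_{r=⌈log₂ N⌉}^{N} C(N,r) · N^{-(2^r-2)·⌈log₂ N⌉/(N-2)} < 1/(⌈log₂ N⌉)!`. -/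
theorem sum_binom_rpow_lt (N : ℕ) (hN : 3 ≤ N) :
    ∑ r ∈ Finset.Icc (Nat.clog 2 N) N,
        (N.choose r : ℝ) *
          (N : ℝ) ^ (-(((2 : ℝ) ^ r - 2) * (Nat.clog 2 N : ℝ) / ((N : ℝ) - 2)))
      < 1 / (Nat.factorial (Nat.clog 2 N) : ℝ) := by
  by_cases h5 : 5 ≤ N
  · exact big_case N h5
  · interval_cases N
    · -- N = 3
      have hk : Nat.clog 2 3 = 2 := by
        have h1 : Nat.clog 2 3 ≤ 2 := (Nat.clog_le_iff_le_pow one_lt_two).2 (by norm_num)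
        have h2 : 1 < Nat.clog 2 3 := (Nat.lt_clog_iff_pow_lt one_lt_two).2 (by norm_num)
        omega
      rw [hk]
      rw [show Finset.Icc 2 3 = {2, 3} from rfl]
      rw [Finset.sum_insert (by decide), Finset.sum_singleton]
      push_cast
      rw [show -(((2:ℝ)^2 - 2) * 2 / ((3:ℝ) - 2)) = ((-4 : ℤ):ℝ) by norm_num,
        show -(((2:ℝ)^3 - 2) * 2 / ((3:ℝ) - 2)) = ((-12 : ℤ):ℝ) by norm_num,
        Real.rpow_intCast, Real.rpow_intCast]
      norm_num
    · -- N = 4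
      have hk : Nat.clog 2 4 = 2 := by
        have h1 : Nat.clog 2 4 ≤ 2 := (Nat.clog_le_iff_le_pow one_lt_two).2 (by norm_num)
        have h2 : 1 < Nat.clog 2 4 := (Nat.lt_clog_iff_pow_lt one_lt_two).2 (by norm_num)
        omega
      rw [hk]
      rw [show Finset.Icc 2 4 = {2, 3, 4} from rfl]
      rw [Finset.sum_insert (by decide), Finset.sum_insert (by decide), Finset.sum_singleton]
      push_cast
      rw [show -(((2:ℝ)^2 - 2) * 2 / ((4:ℝ) - 2)) = ((-2 : ℤ):ℝ) by norm_num,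
        show -(((2:ℝ)^3 - 2) * 2 / ((4:ℝ) - 2)) = ((-6 : ℤ):ℝ) by norm_num,
        show -(((2:ℝ)^4 - 2) * 2 / ((4:ℝ) - 2)) = ((-14 : ℤ):ℝ) by norm_num,
        Real.rpow_intCast, Real.rpow_intCast, Real.rpow_intCast]
      norm_num [Nat.choose]
end

section
/- Let N ≥ 2 and M = ⌈2^N / N⌉. Then r(N,M), the expected number of zero bits in the N-bit binary representation of the maximum of M i.i.d. uniform random variables on {0,1,...,2^N−1}, satisfies r(N,M) < ⌈log₂ N⌉/2 + 0.455. -/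
open Finset

/-- The number of zero bits among the `N` binary digits of `v`. -/
def zeroBits (N v : ℕ) : ℕ :=
  ((Finset.range N).filter (fun i => v.testBit i = false)).card

/-- `rExp N M` is the expected number of zero bits in the `N`-bit binary representation of the
maximum of `M` i.i.d. uniform random variables on `{0,1,…,2^N-1}` (computed by averaging over
all `(2^N)^M` equally likely tuples of draws). -/
noncomputable def rExp (N M : ℕ) : ℝ :=
  (∑ x : Fin M → Fin (2 ^ N),
      (zeroBits N (Finset.univ.sup (fun m => (x m : ℕ))) : ℝ)) / ((2 ^ N : ℝ) ^ M)

namespace ZB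


/-- the sup of a tuple, as ℕ -/
def supv {N M : ℕ} (x : Fin M → Fin (2 ^ N)) : ℕ := Finset.univ.sup (fun m => (x m : ℕ))

lemma card_filter_lt (n k : ℕ) (hk : k ≤ n) :
    (Finset.filter (fun a : Fin n => (a : ℕ) < k) Finset.univ).card = k := by
  rw [← Finset.card_range k]
  apply Finset.card_bij (fun (a : Fin n) _ => (a : ℕ))
  · intro a ha; simp only [mem_filter] at ha; simpa using ha.2
  · intro a ha b hb h; exact Fin.ext h
  · intro b hb
    refine ⟨⟨b, lt_of_lt_of_le (Finset.mem_range.mp hb) hk⟩, ?_, rfl⟩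
    simp [Finset.mem_range.mp hb]

lemma supv_lt {N M : ℕ} (x : Fin M → Fin (2 ^ N)) : supv x < 2 ^ N := by
  rcases Nat.eq_zero_or_pos M with rfl | hM
  · simp only [supv, Finset.univ_eq_empty, Finset.sup_empty]
    · positivity
  · rw [supv, Finset.sup_lt_iff (by positivity)]
    intro m _; exact (x m).isLt

lemma cnt_lt (N M k : ℕ) (hk : k ≤ 2 ^ N) (hM : 0 < M) :
    ((Finset.univ : Finset (Fin M → Fin (2 ^ N))).filter (fun x => supv x < k)).card
      = k ^ M := by
  rcases Nat.eq_zero_or_pos k with rfl | hk0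
  · rw [Finset.filter_false_of_mem (by intro x _; exact (Nat.not_lt_zero _))]
    simp [Nat.pos_iff_ne_zero.mp hM]
  · have h : (Finset.univ.filter (fun x : Fin M → Fin (2 ^ N) => supv x < k))
        = Fintype.piFinset (fun _ : Fin M => Finset.univ.filter (fun a : Fin (2 ^ N) => (a : ℕ) < k)) := by
      ext x
      simp only [Finset.mem_filter, Finset.mem_univ, true_and, Fintype.mem_piFinset, supv,
        Finset.sup_lt_iff (show (⊥ : ℕ) < k from hk0)]
      simp
    rw [h, Fintype.card_piFinset]
    simp only [card_filter_lt (2 ^ N) k hk]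
    simp

lemma cnt_eq (N M v : ℕ) (hv : v < 2 ^ N) (hM : 0 < M) :
    ((Finset.univ : Finset (Fin M → Fin (2 ^ N))).filter (fun x => supv x = v)).card + v ^ M
      = (v + 1) ^ M := by
  have h1 : (Finset.univ.filter (fun x : Fin M → Fin (2 ^ N) => supv x < v + 1))
      = (Finset.univ.filter (fun x => supv x = v)) ∪ (Finset.univ.filter (fun x => supv x < v)) := by
    ext x; simp only [Finset.mem_filter, Finset.mem_union, Finset.mem_univ, true_and]
    omega
  have h2 : Disjoint (Finset.univ.filter (fun x : Fin M → Fin (2 ^ N) => supv x = v))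
      (Finset.univ.filter (fun x => supv x < v)) := by
    rw [Finset.disjoint_filter]
    intro x _ h; omega
  have := cnt_lt N M (v + 1) hv hM
  rw [h1, Finset.card_union_of_disjoint h2, cnt_lt N M v (le_of_lt hv) hM] at this
  omega



def dct (M v : ℕ) : ℕ := (v + 1) ^ M - v ^ M

lemma dct_cast (M v : ℕ) : (dct M v : ℝ) = ((v : ℝ) + 1) ^ M - (v : ℝ) ^ M := by
  have h : v ^ M ≤ (v + 1) ^ M := Nat.pow_le_pow_left (by omega) M
  rw [dct]
  push_cast [h]
  ring

/-- termwise pairing inequality -/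
lemma elem (m q W v : ℕ) (hq : 0 < q) (h : v + q + 1 ≤ W) :
    (W : ℝ) ^ m * (((v : ℝ) + 1) ^ (m + 1) - (v : ℝ) ^ (m + 1))
      ≤ ((W - q : ℕ) : ℝ) ^ m
          * ((((v + q : ℕ) : ℝ) + 1) ^ (m + 1) - ((v + q : ℕ) : ℝ) ^ (m + 1)) := by
  have hqW : q ≤ W := by omega
  have hcast : ((W - q : ℕ) : ℝ) = (W : ℝ) - (q : ℝ) := by
    push_cast [hqW]; ring
  set x : ℝ := (v : ℝ) with hx
  have hx0 : 0 ≤ x := Nat.cast_nonneg v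
  set Q : ℝ := (q : ℝ) with hQ
  have hQ0 : 0 < Q := by rw [hQ]; exact_mod_cast hq
  set Wr : ℝ := (W : ℝ) with hW
  have hWv : x + Q + 1 ≤ Wr := by rw [hx, hQ, hW]; exact_mod_cast h
  have key : ∀ y : ℝ, (y + 1) ^ (m + 1) - y ^ (m + 1)
      = ∑ t ∈ range (m + 1), (y + 1) ^ t * y ^ (m - t) := by
    intro y
    have := geom_sum₂_mul (y + 1) y (m + 1)
    simp only [add_sub_cancel_left, mul_one] at this
    rw [← this]
    apply Finset.sum_congr rfl
    intro t ht; congr 2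
  have hcq : ((v + q : ℕ) : ℝ) = x + Q := by push_cast; ring
  rw [hcast, hcq, key, key, Finset.mul_sum, Finset.mul_sum]
  apply Finset.sum_le_sum
  intro t ht
  have htm : t ≤ m := by simpa using Nat.lt_succ_iff.mp (Finset.mem_range.mp ht)
  have hsplit : ∀ z : ℝ, z ^ m = z ^ t * z ^ (m - t) := by
    intro z; rw [← pow_add]; congr 1; omega
  rw [hsplit Wr, hsplit (Wr - Q)]
  have e1 : Wr ^ t * Wr ^ (m - t) * ((x + 1) ^ t * x ^ (m - t))
      = (Wr * (x + 1)) ^ t * (Wr * x) ^ (m - t) := by rw [mul_pow, mul_pow]; ring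
  have e2 : (Wr - Q) ^ t * (Wr - Q) ^ (m - t) * ((x + Q + 1) ^ t * (x + Q) ^ (m - t))
      = ((Wr - Q) * (x + Q + 1)) ^ t * ((Wr - Q) * (x + Q)) ^ (m - t) := by
    rw [mul_pow, mul_pow]; ring
  rw [e1, e2]
  have fa : Wr * (x + 1) ≤ (Wr - Q) * (x + Q + 1) := by nlinarith
  have fb : Wr * x ≤ (Wr - Q) * (x + Q) := by nlinarith
  have ha0 : 0 ≤ Wr * (x + 1) := by nlinarith
  have hb0 : 0 ≤ Wr * x := by nlinarith
  exact mul_le_mul (pow_le_pow_left₀ ha0 fa t) (pow_le_pow_left₀ hb0 fb (m - t))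
    (pow_nonneg hb0 _) (pow_nonneg (by nlinarith) t)

/-- membership: if v < 2^N has bit i equal to false (i < N), then v + 2^i < 2^N and has bit i true -/
lemma pair_mem (N i v : ℕ) (hi : i < N) (hv : v < 2 ^ N) (hb : v.testBit i = false) :
    v + 2 ^ i < 2 ^ N ∧ (v + 2 ^ i).testBit i = true := by
  set q := 2 ^ i with hq
  have hq0 : 0 < q := Nat.pow_pos (by norm_num)
  have he : v / q % 2 = 0 := by
    have h2 : ¬ (v / q % 2 = 1) := by
      rw [hq]
      simpa [Nat.testBit_eq_decide_div_mod_eq] using hb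
    omega
  have hdm : q * (v / q) + v % q = v := Nat.div_add_mod v q
  have hr : v % q < q := Nat.mod_lt _ hq0
  have h2N : 2 ^ N = q * 2 ^ (N - i) := by rw [hq, ← pow_add]; congr 1; omega
  have hKe : 2 ^ (N - i) = 2 * 2 ^ (N - i - 1) := by
    rw [← pow_succ']; congr 1; omega
  obtain ⟨a, ha⟩ : ∃ a, v / q = 2 * a :=
    ⟨v / q / 2, by have h3 := Nat.div_add_mod (v / q) 2; omega⟩
  rw [ha] at hdm
  have h2a : 2 * a < 2 ^ (N - i) := by
    have h1 : q * (2 * a) < q * 2 ^ (N - i) := by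
      calc q * (2 * a) ≤ v := by omega
        _ < q * 2 ^ (N - i) := by rw [← h2N]; exact hv
    exact lt_of_mul_lt_mul_left h1 (Nat.zero_le q)
  have h2a2 : 2 * a + 2 ≤ 2 ^ (N - i) := by omega
  constructor
  · have hexp : q * (2 * a + 2) = q * (2 * a) + q + q := by ring
    have hlt : v + q < q * (2 * a + 2) := by omega
    calc v + q < q * (2 * a + 2) := hlt
      _ ≤ q * 2 ^ (N - i) := Nat.mul_le_mul_left q h2a2
      _ = 2 ^ N := h2N.symm
  · have hdq : (v + q) / q = 2 * a + 1 := by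
      rw [Nat.add_div_right v hq0, ha]
    rw [Nat.testBit_eq_decide_div_mod_eq, ← hq, hdq]
    have hmod : (2 * a + 1) % 2 = 1 := by omega
    simp [hmod]


def cntZ (N M i : ℕ) : ℕ :=
  ((Finset.univ : Finset (Fin M → Fin (2 ^ N))).filter
    (fun x => (supv x).testBit i = false)).card

def cntO (N M i : ℕ) : ℕ :=
  ((Finset.univ : Finset (Fin M → Fin (2 ^ N))).filter
    (fun x => (supv x).testBit i = true)).card

def T0 (N i : ℕ) : Finset ℕ := (Finset.range (2 ^ N)).filter (fun v => v.testBit i = false)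
def T1 (N i : ℕ) : Finset ℕ := (Finset.range (2 ^ N)).filter (fun v => v.testBit i = true)

lemma cnt_general (N M : ℕ) (hM : 0 < M) (p : ℕ → Prop) [DecidablePred p] :
    ((Finset.univ : Finset (Fin M → Fin (2 ^ N))).filter (fun x => p (supv x))).card
      = ∑ v ∈ (Finset.range (2 ^ N)).filter p, dct M v := by
  rw [Finset.card_eq_sum_card_fiberwise (f := fun x => supv x)
    (t := (Finset.range (2 ^ N)).filter p)
    (fun x hx => by
      rw [Finset.mem_coe, Finset.mem_filter] at hx ⊢
      exact ⟨Finset.mem_range.mpr (supv_lt x), hx.2⟩)]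
  apply Finset.sum_congr rfl
  intro v hv
  obtain ⟨hv1, hv2⟩ := Finset.mem_filter.mp hv
  have heq : (Finset.univ.filter (fun x : Fin M → Fin (2 ^ N) => p (supv x))).filter
      (fun x => supv x = v) = Finset.univ.filter (fun x => supv x = v) := by
    ext x
    simp only [Finset.mem_filter, Finset.mem_univ, true_and]
    constructor
    · rintro ⟨_, h⟩; exact h
    · intro h; exact ⟨by rw [h]; exact hv2, h⟩
  rw [heq]
  have := cnt_eq N M v (Finset.mem_range.mp hv1) hM
  have hle : v ^ M ≤ (v + 1) ^ M := Nat.pow_le_pow_left (by omega) M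
  rw [dct]; omega

lemma cntZ_eq (N M i : ℕ) (hM : 0 < M) : cntZ N M i = ∑ v ∈ T0 N i, dct M v :=
  cnt_general N M hM (fun v => v.testBit i = false)

lemma cntO_eq (N M i : ℕ) (hM : 0 < M) : cntO N M i = ∑ v ∈ T1 N i, dct M v :=
  cnt_general N M hM (fun v => v.testBit i = true)

lemma cntZO (N M i : ℕ) : cntZ N M i + cntO N M i = 2 ^ (N * M) := by
  have h := Finset.card_filter_add_card_filter_not
    (s := (Finset.univ : Finset (Fin M → Fin (2 ^ N))))
    (p := fun x => (supv x).testBit i = false)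
  have h2 : (Finset.univ : Finset (Fin M → Fin (2 ^ N))).filter
      (fun x => ¬ (supv x).testBit i = false)
      = Finset.univ.filter (fun x => (supv x).testBit i = true) := by
    apply Finset.filter_congr
    intro x _
    simp
  rw [h2] at h
  have h3 : (Finset.univ : Finset (Fin M → Fin (2 ^ N))).card = 2 ^ (N * M) := by
    rw [Finset.card_univ]
    simp [pow_mul]
  rw [cntZ, cntO]
  omega

lemma rExp_def (N M : ℕ) :
    rExp N M = (∑ x : Fin M → Fin (2 ^ N), (zeroBits N (supv x) : ℝ)) / ((2 ^ N : ℝ) ^ M) := rfl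

lemma rExp_eq (N M : ℕ) :
    rExp N M = (∑ i ∈ Finset.range N, (cntZ N M i : ℝ)) / ((2 ^ N : ℝ) ^ M) := by
  rw [rExp_def]
  congr 1
  calc (∑ x : Fin M → Fin (2 ^ N), (zeroBits N (supv x) : ℝ))
      = ∑ x : Fin M → Fin (2 ^ N), ∑ i ∈ Finset.range N,
          (if (supv x).testBit i = false then (1 : ℝ) else 0) := by
        apply Finset.sum_congr rfl
        intro x _
        rw [zeroBits, Finset.card_filter]
        push_cast
        rfl
    _ = ∑ i ∈ Finset.range N, ∑ x : Fin M → Fin (2 ^ N),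
          (if (supv x).testBit i = false then (1 : ℝ) else 0) := Finset.sum_comm
    _ = ∑ i ∈ Finset.range N, (cntZ N M i : ℝ) := by
        apply Finset.sum_congr rfl
        intro i _
        rw [cntZ, Finset.card_filter]
        push_cast
        rfl

lemma step4 (N M i : ℕ) (hi : i < N) (hM : 0 < M) :
    ((2 : ℝ) ^ N) ^ (M - 1) * (cntZ N M i : ℝ)
      ≤ ((2 ^ N - 2 ^ i : ℕ) : ℝ) ^ (M - 1) * (cntO N M i : ℝ) := by
  obtain ⟨m, rfl⟩ : ∃ m, M = m + 1 := ⟨M - 1, (Nat.succ_pred_eq_of_pos hM).symm⟩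
  simp only [Nat.add_sub_cancel]
  have hq0 : 0 < 2 ^ i := Nat.pow_pos (by norm_num)
  set q : ℕ := 2 ^ i with hq
  set W : ℕ := 2 ^ N with hW
  set g : ℕ → ℝ := fun w => ((W - q : ℕ) : ℝ) ^ m * (dct (m + 1) w : ℝ) with hg
  rw [cntZ_eq N (m+1) i hM, cntO_eq N (m+1) i hM]
  push_cast [Nat.cast_sum]
  have hPW : ((2 : ℝ) ^ N) = ((W : ℕ) : ℝ) := by rw [hW]; push_cast; ring
  calc ((2:ℝ) ^ N) ^ m * ∑ v ∈ T0 N i, (dct (m + 1) v : ℝ)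
      = ∑ v ∈ T0 N i, ((W : ℕ) : ℝ) ^ m * (dct (m + 1) v : ℝ) := by
        rw [Finset.mul_sum, hPW]
    _ ≤ ∑ v ∈ T0 N i, g (v + q) := by
        apply Finset.sum_le_sum
        intro v hv
        obtain ⟨hv1, hv2⟩ := Finset.mem_filter.mp hv
        have hvlt := Finset.mem_range.mp hv1
        have hpm := pair_mem N i v hi hvlt hv2
        have hle : v + q + 1 ≤ W := hpm.1
        rw [hg]
        simp only []
        rw [dct_cast, dct_cast]
        exact elem m q W v hq0 hle
    _ = ∑ w ∈ (T0 N i).image (· + q), g w := by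
        rw [Finset.sum_image]
        intro x _ y _ hxy
        simp only at hxy
        omega
    _ ≤ ∑ w ∈ T1 N i, g w := by
        apply Finset.sum_le_sum_of_subset_of_nonneg
        · intro w hw
          obtain ⟨v, hv, rfl⟩ := Finset.mem_image.mp hw
          obtain ⟨hv1, hv2⟩ := Finset.mem_filter.mp hv
          have hvlt := Finset.mem_range.mp hv1
          have hpm := pair_mem N i v hi hvlt hv2
          rw [T1, Finset.mem_filter]
          exact ⟨Finset.mem_range.mpr hpm.1, hpm.2⟩
        · intro w _ _
          rw [hg]
          have : (0:ℝ) ≤ (dct (m+1) w : ℝ) := Nat.cast_nonneg _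
          positivity
    _ = ((W - q : ℕ) : ℝ) ^ m * ∑ w ∈ T1 N i, (dct (m + 1) w : ℝ) := by
        rw [Finset.mul_sum]

/-- the central per-bit bound: the probability that bit `i` of the max is zero is at most
`ρ/(1+ρ)` where `ρ = ((2^N-2^i)/2^N)^(M-1)`. -/
lemma pbound (N M i : ℕ) (hi : i < N) (hM : 0 < M) :
    (cntZ N M i : ℝ) / ((2 : ℝ) ^ N) ^ M
      ≤ (((2 ^ N - 2 ^ i : ℕ) : ℝ) / (2 : ℝ) ^ N) ^ (M - 1)
        / (1 + (((2 ^ N - 2 ^ i : ℕ) : ℝ) / (2 : ℝ) ^ N) ^ (M - 1)) := by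
  have hP : (0:ℝ) < (2 : ℝ) ^ N := by positivity
  set P : ℝ := (2 : ℝ) ^ N with hPdef
  set C : ℝ := ((2 ^ N - 2 ^ i : ℕ) : ℝ) with hC
  have hC0 : 0 ≤ C := Nat.cast_nonneg _
  set Z : ℝ := (cntZ N M i : ℝ) with hZ
  set O : ℝ := (cntO N M i : ℝ) with hO
  have hZ0 : 0 ≤ Z := Nat.cast_nonneg _
  have hasum : Z + O = P ^ M := by
    rw [hZ, hO, hPdef, ← Nat.cast_add, cntZO N M i]
    push_cast [pow_mul]
    ring
  have hstep := step4 N M i hi hM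
  rw [← hPdef, ← hC, ← hZ, ← hO] at hstep
  have hPm : (0:ℝ) < P ^ (M - 1) := by positivity
  have hCm : (0:ℝ) ≤ C ^ (M - 1) := by positivity
  have hden : (0:ℝ) < P ^ (M - 1) + C ^ (M - 1) := by linarith
  have hA : (0:ℝ) < P ^ M := by positivity
  have key : Z / P ^ M ≤ C ^ (M - 1) / (P ^ (M - 1) + C ^ (M - 1)) := by
    rw [div_le_div_iff₀ hA hden]
    nlinarith [hstep, hasum]
  have h1 : 1 + (C / P) ^ (M - 1) = (P ^ (M - 1) + C ^ (M - 1)) / P ^ (M - 1) := by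
    rw [div_pow]
    field_simp
  rw [h1, div_pow, div_div_div_cancel_right₀ hPm.ne']
  exact key

noncomputable def rho (N M i : ℕ) : ℝ := (((2 ^ N - 2 ^ i : ℕ) : ℝ) / (2 : ℝ) ^ N) ^ (M - 1)

lemma pbound' (N M i : ℕ) (hi : i < N) (hM : 0 < M) :
    (cntZ N M i : ℝ) / ((2 : ℝ) ^ N) ^ M ≤ rho N M i / (1 + rho N M i) := by
  rw [rho]; exact pbound N M i hi hM

lemma rho_nonneg (N M i : ℕ) : 0 ≤ rho N M i := by
  rw [rho]; positivity

lemma rho_le_one (N M i : ℕ) (hi : i ≤ N) : rho N M i ≤ 1 := by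
  rw [rho]
  apply pow_le_one₀ (by positivity)
  rw [div_le_one (by positivity)]
  calc ((2 ^ N - 2 ^ i : ℕ) : ℝ) ≤ ((2 ^ N : ℕ) : ℝ) := by
        exact_mod_cast Nat.cast_le.mpr (Nat.sub_le _ _)
    _ = (2 : ℝ) ^ N := by push_cast; ring

lemma mono_div {x y : ℝ} (hx : 0 ≤ x) (hxy : x ≤ y) : x / (1 + x) ≤ y / (1 + y) := by
  have h1 : (0:ℝ) < 1 + x := by linarith
  have h2 : (0:ℝ) < 1 + y := by linarith
  rw [div_le_div_iff₀ h1 h2]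
  nlinarith

lemma f_le_half (N M i : ℕ) (hi : i < N) (hM : 0 < M) :
    (cntZ N M i : ℝ) / ((2 : ℝ) ^ N) ^ M ≤ 1 / 2 := by
  calc (cntZ N M i : ℝ) / ((2 : ℝ) ^ N) ^ M ≤ rho N M i / (1 + rho N M i) :=
        pbound' N M i hi hM
    _ ≤ 1 / (1 + 1) := mono_div (rho_nonneg N M i) (rho_le_one N M i (le_of_lt hi))
    _ = 1 / 2 := by norm_num

lemma geom_le {x : ℝ} (h0 : 0 ≤ x) (h1 : x < 1) (n : ℕ) :
    ∑ k ∈ Finset.range n, x ^ k ≤ 1 / (1 - x) := by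
  rw [geom_sum_eq (by intro h; rw [h] at h1; exact lt_irrefl _ h1) n]
  have hd : (0:ℝ) < 1 - x := by linarith
  have heq : (x ^ n - 1) / (x - 1) = (1 - x ^ n) / (1 - x) := by
    rw [← neg_div_neg_eq]; ring_nf
  rw [heq, div_le_div_iff₀ hd hd]
  have hxn : 0 ≤ x ^ n := pow_nonneg h0 n
  nlinarith

lemma exp_bound : Real.exp (-(31 / 32 : ℝ)) ≤ 0.3798 := by
  have h1 : Real.exp (-(31 / 32 : ℝ)) = Real.exp (-1) * Real.exp (1 / 32) := by
    rw [← Real.exp_add]; norm_num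
  have h2 : Real.exp (1 / 32 : ℝ) ≤ 32 / 31 := by
    have h3 := Real.add_one_le_exp (-(1 / 32) : ℝ)
    have h4 : (31 / 32 : ℝ) ≤ Real.exp (-(1 / 32)) := by linarith
    have h5 : Real.exp ((1:ℝ) / 32) = (Real.exp (-(1 / 32)))⁻¹ := by
      rw [← Real.exp_neg]; norm_num
    rw [h5]
    rw [inv_le_comm₀ (by positivity) (by norm_num)]
    linarith
  have h6 : Real.exp (-1 : ℝ) ≤ 1 / 2.7182818283 := by
    rw [Real.exp_neg]
    rw [inv_le_comm₀ (Real.exp_pos 1) (by norm_num)]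
    have := Real.exp_one_gt_d9
    linarith
  rw [h1]
  calc Real.exp (-1) * Real.exp (1/32) ≤ (1 / 2.7182818283) * (32 / 31) := by
        apply mul_le_mul h6 h2 (Real.exp_pos _).le (by norm_num)
    _ ≤ 0.3798 := by norm_num

lemma rho_exp (N M i : ℕ) (hi : i < N) (hM1 : 1 ≤ M) :
    rho N M i ≤ Real.exp (-(((M : ℝ) - 1) * ((2 : ℝ) ^ i / (2 : ℝ) ^ N))) := by
  have h2i : (2:ℕ) ^ i ≤ 2 ^ N := Nat.pow_le_pow_right (by norm_num) (le_of_lt hi)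
  have hbase : (((2 ^ N - 2 ^ i : ℕ) : ℝ) / (2 : ℝ) ^ N) = 1 - (2 : ℝ) ^ i / (2 : ℝ) ^ N := by
    rw [Nat.cast_sub h2i]
    push_cast
    rw [sub_div, div_self (by positivity)]
  rw [rho, hbase]
  set x : ℝ := (2 : ℝ) ^ i / (2 : ℝ) ^ N with hx
  have hx0 : 0 ≤ x := by positivity
  have hx1 : x ≤ 1 := by
    rw [hx, div_le_one (by positivity)]
    exact_mod_cast h2i
  have h1 : 1 - x ≤ Real.exp (-x) := by
    have := Real.add_one_le_exp (-x); linarith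
  have h2 : (1 - x) ^ (M - 1) ≤ (Real.exp (-x)) ^ (M - 1) :=
    pow_le_pow_left₀ (by linarith) h1 _
  have h3 : (Real.exp (-x)) ^ (M - 1) = Real.exp (((M - 1 : ℕ) : ℝ) * (-x)) := by
    rw [Real.exp_nat_mul]
  have h4 : ((M - 1 : ℕ) : ℝ) = (M : ℝ) - 1 := by
    push_cast [hM1]; ring
  rw [h3, h4] at h2
  calc (1 - x) ^ (M - 1) ≤ Real.exp (((M:ℝ) - 1) * (-x)) := h2
    _ = Real.exp (-(((M:ℝ) - 1) * x)) := by ring_nf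

lemma two_mul_le_pow (j : ℕ) (hj : 1 ≤ j) : 2 * j ≤ 2 ^ j := by
  induction j with
  | zero => omega
  | succ k ih =>
    rcases Nat.eq_zero_or_pos k with rfl | hk
    · norm_num
    · have h1 := ih hk
      have h2 : 2 ≤ 2 ^ k := by
        calc 2 = 2 ^ 1 := by norm_num
          _ ≤ 2 ^ k := Nat.pow_le_pow_right (by norm_num) hk
      rw [pow_succ]
      omega

lemma npow_aux (n : ℕ) (hn : 8 ≤ n) : n ≤ 2 ^ (n - 5) := by
  induction n with
  | zero => omega
  | succ k ih =>
    rcases Nat.lt_or_ge k 8 with hk | hk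
    · interval_cases k <;> first | omega | norm_num
    · have h1 := ih (by omega)
      have h2 : 1 ≤ 2 ^ (k - 5) := Nat.one_le_two_pow
      have h3 : (k + 1) - 5 = (k - 5) + 1 := by omega
      rw [h3, pow_succ]
      omega

noncomputable def gfun (j : ℕ) : ℝ := if j = 0 then 0.2753 else ((0.3798 : ℝ) ^ 2) ^ j

lemma gfun_nonneg (j : ℕ) : 0 ≤ gfun j := by
  rw [gfun]; split <;> positivity

lemma gsum_lt (n : ℕ) : ∑ j ∈ Finset.range n, gfun j < 0.455 := by
  rcases Nat.eq_zero_or_pos n with rfl | hn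
  · norm_num
  · have hsplit : ∑ j ∈ Finset.range n, gfun j
        = gfun 0 + ∑ j ∈ Finset.Ico 1 n, gfun j := by
      rw [Finset.range_eq_Ico, ← Finset.sum_Ico_consecutive _ (Nat.zero_le 1) hn]
      congr 1
      simp
    rw [hsplit]
    have h1 : ∑ j ∈ Finset.Ico 1 n, gfun j ≤ (0.3798 : ℝ)^2 / (1 - (0.3798 : ℝ)^2) := by
      have he : ∀ j ∈ Finset.Ico 1 n, gfun j = ((0.3798 : ℝ)^2) ^ j := by
        intro j hj
        have : j ≠ 0 := by
          have := (Finset.mem_Ico.mp hj).1; omega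
        rw [gfun, if_neg this]
      rw [Finset.sum_congr rfl he, Finset.sum_Ico_eq_sum_range]
      have : ∀ k, ((0.3798 : ℝ)^2) ^ (1 + k) = (0.3798 : ℝ)^2 * ((0.3798 : ℝ)^2) ^ k := by
        intro k; rw [pow_add, pow_one]
      rw [Finset.sum_congr rfl (fun k _ => this k), ← Finset.mul_sum]
      calc (0.3798 : ℝ)^2 * ∑ k ∈ Finset.range (n-1), ((0.3798 : ℝ)^2) ^ k
          ≤ (0.3798 : ℝ)^2 * (1 / (1 - (0.3798 : ℝ)^2)) := by
            apply mul_le_mul_of_nonneg_left (geom_le (by norm_num) (by norm_num) _) (by positivity)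
        _ = (0.3798 : ℝ)^2 / (1 - (0.3798 : ℝ)^2) := by ring
    have h0 : gfun 0 = 0.2753 := by rw [gfun]; norm_num
    rw [h0]
    have : (0.3798 : ℝ)^2 / (1 - (0.3798 : ℝ)^2) < 0.1797 := by norm_num
    linarith

lemma small_step (N M i : ℕ) (hi : i < N) (hM : 0 < M) (r : ℝ) (hr : rho N M i = r) :
    (cntZ N M i : ℝ) / ((2 : ℝ) ^ N) ^ M ≤ r / (1 + r) := by
  rw [← hr]; exact pbound' N M i hi hM

end ZB
-- main theorem part, to be appended
/-- For `N ≥ 2` and `M = ⌈2^N / N⌉`, the expected number of zero bits of the maximum of `M`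
i.i.d. uniform `N`-bit binary numbers is less than `⌈log₂ N⌉/2 + 0.455`. -/
theorem expected_zeroBits_max_lt (N M : ℕ) (hN : 2 ≤ N)
    (hM : M = ⌈((2 : ℝ) ^ N / (N : ℝ))⌉₊) :
    rExp N M < (Nat.clog 2 N : ℝ) / 2 + 0.455 := by
  have hN0 : 0 < N := by omega
  have hNr : (0:ℝ) < N := by exact_mod_cast hN0
  have hMreal : ((2:ℝ) ^ N / N) ≤ M := by rw [hM]; exact Nat.le_ceil _
  have hM0 : 0 < M := by
    rw [hM, Nat.ceil_pos]
    positivity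
  have hLN : Nat.clog 2 N ≤ N := by
    rw [Nat.clog_le_iff_le_pow (by norm_num : 1 < 2)]
    exact le_of_lt Nat.lt_two_pow_self
  have hNle : N ≤ 2 ^ Nat.clog 2 N := Nat.le_pow_clog (by norm_num) N
  have h1 : ∑ i ∈ Finset.Ico 0 (Nat.clog 2 N), (ZB.cntZ N M i : ℝ) / ((2:ℝ) ^ N) ^ M
      ≤ (Nat.clog 2 N : ℝ) / 2 := by
    have hb := Finset.sum_le_card_nsmul (Finset.Ico 0 (Nat.clog 2 N))
      (fun i => (ZB.cntZ N M i : ℝ) / ((2:ℝ) ^ N) ^ M) (1/2)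
      (fun i hi => by
        have hiL : i < Nat.clog 2 N := (Finset.mem_Ico.mp hi).2
        exact ZB.f_le_half N M i (lt_of_lt_of_le hiL hLN) hM0)
    rw [Nat.card_Ico, nsmul_eq_mul] at hb
    calc ∑ i ∈ Finset.Ico 0 (Nat.clog 2 N), (ZB.cntZ N M i : ℝ) / ((2:ℝ) ^ N) ^ M
        ≤ ((Nat.clog 2 N - 0 : ℕ) : ℝ) * (1/2) := hb
      _ = (Nat.clog 2 N : ℝ) / 2 := by rw [Nat.sub_zero]; ring
  have h2 : ∑ i ∈ Finset.Ico (Nat.clog 2 N) N, (ZB.cntZ N M i : ℝ) / ((2:ℝ) ^ N) ^ M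
      < 0.455 := by
    by_cases h8 : 8 ≤ N
    · -- large N
      have hL5 : Nat.clog 2 N + 5 ≤ N := by
        have ha := ZB.npow_aux N h8
        have hb : Nat.clog 2 N ≤ N - 5 := (Nat.clog_le_iff_le_pow (by norm_num)).mpr ha
        omega
      have hL32 : (2:ℝ) ^ Nat.clog 2 N * 32 ≤ (2:ℝ) ^ N := by
        have ha : (2:ℕ) ^ (Nat.clog 2 N + 5) ≤ 2 ^ N := Nat.pow_le_pow_right (by norm_num) hL5
        have hb : ((2:ℕ) ^ (Nat.clog 2 N + 5) : ℝ) ≤ ((2:ℕ) ^ N : ℝ) := by exact_mod_cast ha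
        push_cast at hb
        rw [pow_add] at hb
        norm_num at hb
        linarith
      have hNle' : (N:ℝ) ≤ (2:ℝ) ^ Nat.clog 2 N := by exact_mod_cast hNle
      rw [Finset.sum_Ico_eq_sum_range]
      have hterm : ∀ j ∈ Finset.range (N - Nat.clog 2 N),
          (ZB.cntZ N M (Nat.clog 2 N + j) : ℝ) / ((2:ℝ) ^ N) ^ M ≤ ZB.gfun j := by
        intro j hj
        set L := Nat.clog 2 N with hLdef
        have hjN : L + j < N := by
          have := Finset.mem_range.mp hj; omega
        have hfr := ZB.pbound' N M (L + j) hjN hM0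
        have key : (31/32:ℝ) * (2:ℝ)^j ≤ ((M:ℝ) - 1) * ((2:ℝ)^(L+j) / (2:ℝ)^N) := by
          have hb : (0:ℝ) < (2:ℝ)^N := by positivity
          have ht : (0:ℝ) < (2:ℝ)^j := by positivity
          have hMn : (2:ℝ)^N ≤ (M:ℝ) * N := by
            rw [div_le_iff₀ hNr] at hMreal; linarith
          have hM1r : (1:ℝ) ≤ (M:ℝ) := by exact_mod_cast hM0
          have hba : (2:ℝ)^N ≤ (M:ℝ) * (2:ℝ)^L := by
            calc (2:ℝ)^N ≤ (M:ℝ) * N := hMn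
              _ ≤ (M:ℝ) * (2:ℝ)^L := by
                  apply mul_le_mul_of_nonneg_left hNle' (by linarith)
          have hkey0 : 31 * (2:ℝ)^N ≤ 32 * ((M:ℝ)-1) * (2:ℝ)^L := by nlinarith [hba, hL32]
          have hre : ((M:ℝ)-1) * ((2:ℝ)^(L+j) / (2:ℝ)^N)
              = (((M:ℝ)-1) * ((2:ℝ)^L * (2:ℝ)^j)) / (2:ℝ)^N := by
            rw [pow_add]; ring
          rw [hre, le_div_iff₀ hb]
          nlinarith [mul_le_mul_of_nonneg_right hkey0 ht.le]
        have hrE : ZB.rho N M (L + j) ≤ Real.exp (-(31/32 : ℝ)) ^ (2^j : ℕ) := by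
          refine (ZB.rho_exp N M (L + j) hjN hM0).trans ?_
          rw [← Real.exp_nat_mul]
          apply Real.exp_le_exp.mpr
          push_cast
          linarith [key]
        rcases Nat.eq_zero_or_pos j with rfl | hj1
        · have hstep1 : (ZB.cntZ N M (L + 0) : ℝ) / ((2:ℝ) ^ N) ^ M
              ≤ Real.exp (-(31/32 : ℝ)) / (1 + Real.exp (-(31/32 : ℝ))) := by
            refine hfr.trans (ZB.mono_div (ZB.rho_nonneg _ _ _) ?_)
            simpa using hrE
          have hstep2 : Real.exp (-(31/32 : ℝ)) / (1 + Real.exp (-(31/32 : ℝ)))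
              ≤ (0.3798 : ℝ) / (1 + 0.3798) :=
            ZB.mono_div (Real.exp_pos _).le ZB.exp_bound
          have hnum : (0.3798 : ℝ) / (1 + 0.3798) ≤ 0.2753 := by norm_num
          have hg : ZB.gfun 0 = 0.2753 := by rw [ZB.gfun]; norm_num
          rw [hg]
          linarith
        · have hda : (ZB.cntZ N M (L + j) : ℝ) / ((2:ℝ) ^ N) ^ M ≤ ZB.rho N M (L + j) :=
            hfr.trans (div_le_self (ZB.rho_nonneg _ _ _)
              (by linarith [ZB.rho_nonneg N M (L + j)]))
          have hE1 : Real.exp (-(31/32 : ℝ)) ≤ 1 :=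
            Real.exp_le_one_iff.mpr (by norm_num)
          have hstep : Real.exp (-(31/32:ℝ)) ^ ((2:ℕ)^j) ≤ Real.exp (-(31/32:ℝ)) ^ (2*j) :=
            pow_le_pow_of_le_one (Real.exp_pos _).le hE1 (ZB.two_mul_le_pow j hj1)
          have hstep2 : Real.exp (-(31/32:ℝ)) ^ (2*j) ≤ (0.3798:ℝ) ^ (2*j) :=
            pow_le_pow_left₀ (Real.exp_pos _).le ZB.exp_bound _
          have hg : ZB.gfun j = ((0.3798:ℝ)^2)^j := by rw [ZB.gfun, if_neg (by omega)]
          rw [hg]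
          calc (ZB.cntZ N M (L + j) : ℝ) / ((2:ℝ) ^ N) ^ M
              ≤ ZB.rho N M (L + j) := hda
            _ ≤ Real.exp (-(31/32:ℝ)) ^ ((2:ℕ)^j) := hrE
            _ ≤ Real.exp (-(31/32:ℝ)) ^ (2*j) := hstep
            _ ≤ (0.3798:ℝ) ^ (2*j) := hstep2
            _ = ((0.3798:ℝ)^2)^j := pow_mul _ 2 j
      calc ∑ j ∈ Finset.range (N - Nat.clog 2 N),
            (ZB.cntZ N M (Nat.clog 2 N + j) : ℝ) / ((2:ℝ) ^ N) ^ M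
          ≤ ∑ j ∈ Finset.range (N - Nat.clog 2 N), ZB.gfun j := Finset.sum_le_sum hterm
        _ < 0.455 := ZB.gsum_lt _
    · -- small N
      have hN7 : N < 8 := by omega
      interval_cases N
      · -- N = 2
        have hMv : M = 2 := by rw [hM, Nat.ceil_eq_iff (by norm_num)]; norm_num
        subst hMv
        have hLv : Nat.clog 2 2 = 1 := by norm_num [Nat.clog]
        rw [hLv, Finset.sum_Ico_eq_sum_range, show (2-1 : ℕ) = 1 from rfl]
        simp only [Finset.sum_range_succ, Finset.sum_range_zero, zero_add, Nat.reduceAdd]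
        have e1 := ZB.small_step 2 2 1 (by norm_num) (by norm_num) ((1/2:ℝ)^1)
          (by rw [ZB.rho]; norm_num)
        have hnum : ((1/2:ℝ)^1)/(1+(1/2:ℝ)^1) < 0.455 := by norm_num
        linarith
      · -- N = 3
        have hMv : M = 3 := by rw [hM, Nat.ceil_eq_iff (by norm_num)]; norm_num
        subst hMv
        have hLv : Nat.clog 2 3 = 2 := by norm_num [Nat.clog]
        rw [hLv, Finset.sum_Ico_eq_sum_range, show (3-2 : ℕ) = 1 from rfl]
        simp only [Finset.sum_range_succ, Finset.sum_range_zero, zero_add, Nat.reduceAdd]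
        have e1 := ZB.small_step 3 3 2 (by norm_num) (by norm_num) ((1/2:ℝ)^2)
          (by rw [ZB.rho]; norm_num)
        have hnum : ((1/2:ℝ)^2)/(1+(1/2:ℝ)^2) < 0.455 := by norm_num
        linarith
      · -- N = 4
        have hMv : M = 4 := by rw [hM, Nat.ceil_eq_iff (by norm_num)]; norm_num
        subst hMv
        have hLv : Nat.clog 2 4 = 2 := by norm_num [Nat.clog]
        rw [hLv, Finset.sum_Ico_eq_sum_range, show (4-2 : ℕ) = 2 from rfl]
        simp only [Finset.sum_range_succ, Finset.sum_range_zero, zero_add, Nat.reduceAdd]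
        have e1 := ZB.small_step 4 4 2 (by norm_num) (by norm_num) ((3/4:ℝ)^3)
          (by rw [ZB.rho]; norm_num)
        have e2 := ZB.small_step 4 4 3 (by norm_num) (by norm_num) ((1/2:ℝ)^3)
          (by rw [ZB.rho]; norm_num)
        have hnum : ((3/4:ℝ)^3)/(1+(3/4:ℝ)^3) + ((1/2:ℝ)^3)/(1+(1/2:ℝ)^3) < 0.455 := by
          norm_num
        linarith
      · -- N = 5
        have hMv : M = 7 := by rw [hM, Nat.ceil_eq_iff (by norm_num)]; norm_num
        subst hMv
        have hLv : Nat.clog 2 5 = 3 := by norm_num [Nat.clog]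
        rw [hLv, Finset.sum_Ico_eq_sum_range, show (5-3 : ℕ) = 2 from rfl]
        simp only [Finset.sum_range_succ, Finset.sum_range_zero, zero_add, Nat.reduceAdd]
        have e1 := ZB.small_step 5 7 3 (by norm_num) (by norm_num) ((3/4:ℝ)^6)
          (by rw [ZB.rho]; norm_num)
        have e2 := ZB.small_step 5 7 4 (by norm_num) (by norm_num) ((1/2:ℝ)^6)
          (by rw [ZB.rho]; norm_num)
        have hnum : ((3/4:ℝ)^6)/(1+(3/4:ℝ)^6) + ((1/2:ℝ)^6)/(1+(1/2:ℝ)^6) < 0.455 := by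
          norm_num
        linarith
      · -- N = 6
        have hMv : M = 11 := by rw [hM, Nat.ceil_eq_iff (by norm_num)]; norm_num
        subst hMv
        have hLv : Nat.clog 2 6 = 3 := by norm_num [Nat.clog]
        rw [hLv, Finset.sum_Ico_eq_sum_range, show (6-3 : ℕ) = 3 from rfl]
        simp only [Finset.sum_range_succ, Finset.sum_range_zero, zero_add, Nat.reduceAdd]
        have e1 := ZB.small_step 6 11 3 (by norm_num) (by norm_num) ((7/8:ℝ)^10)
          (by rw [ZB.rho]; norm_num)
        have e2 := ZB.small_step 6 11 4 (by norm_num) (by norm_num) ((3/4:ℝ)^10)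
          (by rw [ZB.rho]; norm_num)
        have e3 := ZB.small_step 6 11 5 (by norm_num) (by norm_num) ((1/2:ℝ)^10)
          (by rw [ZB.rho]; norm_num)
        have hnum : ((7/8:ℝ)^10)/(1+(7/8:ℝ)^10) + ((3/4:ℝ)^10)/(1+(3/4:ℝ)^10)
            + ((1/2:ℝ)^10)/(1+(1/2:ℝ)^10) < 0.455 := by norm_num
        linarith
      · -- N = 7
        have hMv : M = 19 := by rw [hM, Nat.ceil_eq_iff (by norm_num)]; norm_num
        subst hMv
        have hLv : Nat.clog 2 7 = 3 := by norm_num [Nat.clog]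
        rw [hLv, Finset.sum_Ico_eq_sum_range, show (7-3 : ℕ) = 4 from rfl]
        simp only [Finset.sum_range_succ, Finset.sum_range_zero, zero_add, Nat.reduceAdd]
        have e1 := ZB.small_step 7 19 3 (by norm_num) (by norm_num) ((15/16:ℝ)^18)
          (by rw [ZB.rho]; norm_num)
        have e2 := ZB.small_step 7 19 4 (by norm_num) (by norm_num) ((7/8:ℝ)^18)
          (by rw [ZB.rho]; norm_num)
        have e3 := ZB.small_step 7 19 5 (by norm_num) (by norm_num) ((3/4:ℝ)^18)
          (by rw [ZB.rho]; norm_num)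
        have e4 := ZB.small_step 7 19 6 (by norm_num) (by norm_num) ((1/2:ℝ)^18)
          (by rw [ZB.rho]; norm_num)
        have hnum : ((15/16:ℝ)^18)/(1+(15/16:ℝ)^18) + ((7/8:ℝ)^18)/(1+(7/8:ℝ)^18)
            + ((3/4:ℝ)^18)/(1+(3/4:ℝ)^18) + ((1/2:ℝ)^18)/(1+(1/2:ℝ)^18) < 0.455 := by
          norm_num
        linarith
  calc rExp N M = (∑ i ∈ Finset.range N, (ZB.cntZ N M i : ℝ)) / ((2:ℝ) ^ N) ^ M := ZB.rExp_eq N M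
    _ = ∑ i ∈ Finset.range N, (ZB.cntZ N M i : ℝ) / ((2:ℝ) ^ N) ^ M := Finset.sum_div _ _ _
    _ = ∑ i ∈ Finset.Ico 0 (Nat.clog 2 N), (ZB.cntZ N M i : ℝ) / ((2:ℝ) ^ N) ^ M
        + ∑ i ∈ Finset.Ico (Nat.clog 2 N) N, (ZB.cntZ N M i : ℝ) / ((2:ℝ) ^ N) ^ M := by
        rw [Finset.sum_Ico_consecutive _ (Nat.zero_le _) hLN, ← Finset.range_eq_Ico]
    _ < (Nat.clog 2 N : ℝ) / 2 + 0.455 := add_lt_add_of_le_of_lt h1 h2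
end

section
/- For all integers N ≥ 1 and M ≥ 1, the expected number of zero bits in the N-bit binary representation of the maximum of M i.i.d. uniform random variables on {0,1,...,2^N−1} is at most N/2, i.e., r(N,M) ≤ r(N,1) = N/2. -/
lemma xor_two_pow_of_testBit_false {a i : ℕ} (h : a.testBit i = false) :
    a ^^^ 2 ^ i = a + 2 ^ i := by
  apply Nat.eq_of_testBit_eq
  intro j
  rw [Nat.add_comm a (2 ^ i)]
  rcases lt_trichotomy j i with hj | rfl | hj
  · rw [Nat.testBit_two_pow_add_gt hj]
    simp [Nat.testBit_xor, Nat.testBit_two_pow, hj.ne']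
  · rw [Nat.testBit_two_pow_add_eq, h]
    simp [Nat.testBit_xor, h]
  · have h1 : a / 2 ^ i % 2 = 0 := by
      rw [Nat.testBit_eq_decide_div_mod_eq] at h
      simpa using h
    have hr : a % 2 ^ (i + 1) < 2 ^ i := by
      have h2 : a % (2 ^ i * 2) / 2 ^ i = a / 2 ^ i % 2 := Nat.mod_mul_right_div_self a _ _
      rw [h1] at h2
      have h3 : a % 2 ^ (i + 1) / 2 ^ i = 0 := by rwa [pow_succ]
      exact (Nat.div_eq_zero_iff.mp h3).resolve_left (Nat.two_pow_pos i).ne'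
    have hdiv : (2 ^ i + a) / 2 ^ j = a / 2 ^ j := by
      obtain ⟨k, rfl⟩ : ∃ k, j = (i + 1) + k := ⟨j - (i + 1), by omega⟩
      have e := pow_succ 2 i
      have e2 : ∀ b, b < 2 ^ (i + 1) →
          (2 ^ (i + 1) * (a / 2 ^ (i + 1)) + b) / 2 ^ (i + 1) = a / 2 ^ (i + 1) :=
        fun b hb => by rw [Nat.mul_add_div (Nat.two_pow_pos _), Nat.div_eq_of_lt hb, Nat.add_zero]
      have h4 : (2 ^ i + a) / 2 ^ (i + 1) = a / 2 ^ (i + 1) := by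
        have hq := Nat.div_add_mod a (2 ^ (i + 1))
        calc (2 ^ i + a) / 2 ^ (i + 1)
            = (2 ^ (i + 1) * (a / 2 ^ (i + 1)) + (2 ^ i + a % 2 ^ (i + 1))) / 2 ^ (i + 1) := by
              congr 1; omega
          _ = a / 2 ^ (i + 1) := e2 _ (by omega)
      rw [pow_add, ← Nat.div_div_eq_div_mul, ← Nat.div_div_eq_div_mul, h4]
    have hx : (a ^^^ 2 ^ i).testBit j = a.testBit j := by
      simp [Nat.testBit_xor, Nat.testBit_two_pow, hj.ne]
    rw [hx, Nat.testBit_eq_decide_div_mod_eq, Nat.testBit_eq_decide_div_mod_eq, hdiv]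

lemma xor_two_pow_le (a i : ℕ) : a ^^^ 2 ^ i ≤ a + 2 ^ i := by
  cases hb : a.testBit i
  · exact le_of_eq (xor_two_pow_of_testBit_false hb)
  · have h2 : (a ^^^ 2 ^ i).testBit i = false := by
      simp [Nat.testBit_xor, hb, Nat.testBit_two_pow]
    have h3 := xor_two_pow_of_testBit_false h2
    rw [Nat.xor_assoc, Nat.xor_self, Nat.xor_zero] at h3
    exact le_trans (Nat.le.intro h3.symm) (Nat.le_add_right _ _)



lemma sup_xor {M : ℕ} (hM : 1 ≤ M) (x : Fin M → ℕ) {i : ℕ}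
    (hs : (Finset.univ.sup x).testBit i = false) :
    Finset.univ.sup (fun m => x m ^^^ 2 ^ i) = Finset.univ.sup x + 2 ^ i := by
  have hne : Nonempty (Fin M) := ⟨⟨0, hM⟩⟩
  obtain ⟨m₀, -, hm₀⟩ := Finset.exists_mem_eq_sup Finset.univ Finset.univ_nonempty x
  apply le_antisymm
  · apply Finset.sup_le
    intro m _
    exact le_trans (xor_two_pow_le _ _)
      (Nat.add_le_add_right (Finset.le_sup (Finset.mem_univ m)) _)
  · have h1 : x m₀ ^^^ 2 ^ i = Finset.univ.sup x + 2 ^ i := by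
      rw [hm₀] at hs ⊢
      exact xor_two_pow_of_testBit_false hs
    rw [← h1]
    exact Finset.le_sup (f := fun m => x m ^^^ 2 ^ i) (Finset.mem_univ m₀)

lemma sum_zeroBits' {α : Type*} [Fintype α] [DecidableEq α] (N : ℕ) (f : α → ℕ) :
    ∑ x : α, ((Finset.range N).filter (fun i => (f x).testBit i = false)).card
      = ∑ i ∈ Finset.range N,
        (Finset.univ.filter (fun x : α => (f x).testBit i = false)).card := by
  simp_rw [Finset.card_filter]
  exact Finset.sum_comm

lemma card_filter_le (N M i : ℕ) (hi : i < N) (hM : 1 ≤ M) :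
    2 * (Finset.univ.filter (fun x : Fin M → Fin (2 ^ N) =>
        (Finset.univ.sup (fun m => (x m : ℕ))).testBit i = false)).card ≤ (2 ^ N) ^ M := by
  set A := Finset.univ.filter (fun x : Fin M → Fin (2 ^ N) =>
      (Finset.univ.sup (fun m => (x m : ℕ))).testBit i = false) with hA
  have hpow : (2 : ℕ) ^ i < 2 ^ N := Nat.pow_lt_pow_right one_lt_two hi
  set φ : (Fin M → Fin (2 ^ N)) → (Fin M → Fin (2 ^ N)) :=
    fun x m => ⟨(x m : ℕ) ^^^ 2 ^ i, Nat.xor_lt_two_pow (x m).isLt hpow⟩ with hφ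
  have hmaps : ∀ x ∈ A, φ x ∈ Aᶜ := by
    intro x hx
    simp only [hA, Finset.mem_filter, Finset.mem_univ, true_and] at hx
    simp only [Finset.mem_compl, hA, Finset.mem_filter, Finset.mem_univ, true_and]
    have hsup : Finset.univ.sup (fun m => ((φ x) m : ℕ))
        = Finset.univ.sup (fun m => (x m : ℕ)) + 2 ^ i := sup_xor hM _ hx
    rw [hsup, Nat.add_comm, Nat.testBit_two_pow_add_eq, hx]
    simp
  have hinj : Set.InjOn φ A := by
    intro x hx y hy hxy
    funext m
    have := congrFun hxy m
    apply Fin.ext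
    have h2 : (x m : ℕ) ^^^ 2 ^ i = (y m : ℕ) ^^^ 2 ^ i := congrArg Fin.val this
    exact Nat.xor_left_injective h2
  have hle : A.card ≤ Aᶜ.card := Finset.card_le_card_of_injOn φ hmaps hinj
  have hcompl : Aᶜ.card = Fintype.card (Fin M → Fin (2 ^ N)) - A.card := Finset.card_compl A
  have htot : A.card ≤ Fintype.card (Fin M → Fin (2 ^ N)) := Finset.card_le_univ A
  have hcard : Fintype.card (Fin M → Fin (2 ^ N)) = (2 ^ N) ^ M := by
    simp [Fintype.card_fun]
  omega

lemma card_filter_eq (N i : ℕ) (hi : i < N) :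
    2 * (Finset.univ.filter (fun v : Fin (2 ^ N) => (v : ℕ).testBit i = false)).card
      = 2 ^ N := by
  set B := Finset.univ.filter (fun v : Fin (2 ^ N) => (v : ℕ).testBit i = false) with hB
  have hpow : (2 : ℕ) ^ i < 2 ^ N := Nat.pow_lt_pow_right one_lt_two hi
  set ψ : Fin (2 ^ N) → Fin (2 ^ N) :=
    fun v => ⟨(v : ℕ) ^^^ 2 ^ i, Nat.xor_lt_two_pow v.isLt hpow⟩ with hψ
  have hbit : ∀ v : Fin (2 ^ N), ((ψ v : Fin (2 ^ N)) : ℕ).testBit i = !((v : ℕ).testBit i) := by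
    intro v
    simp [hψ, Nat.testBit_xor, Nat.testBit_two_pow]
  have hcardeq : B.card = Bᶜ.card := by
    apply Finset.card_bij' (fun v _ => ψ v) (fun v _ => ψ v)
    · intro v hv
      simp only [hB, Finset.mem_filter, Finset.mem_univ, true_and] at hv
      simp only [Finset.mem_compl, hB, Finset.mem_filter, Finset.mem_univ, true_and]
      rw [hbit v, hv]
      simp
    · intro v hv
      simp only [Finset.mem_compl, hB, Finset.mem_filter, Finset.mem_univ, true_and] at hv
      simp only [hB, Finset.mem_filter, Finset.mem_univ, true_and]
      rw [hbit v]
      simpa using hv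
    · intro v _
      apply Fin.ext
      simp [hψ, Nat.xor_assoc]
    · intro v _
      apply Fin.ext
      simp [hψ, Nat.xor_assoc]
  have hcompl : B.card + Bᶜ.card = Fintype.card (Fin (2 ^ N)) := Finset.card_add_card_compl B
  rw [Fintype.card_fin] at hcompl
  omega


/-- For all `N ≥ 1` and `M ≥ 1`, the expected number of zero bits of the maximum of `M` i.i.d.
uniform `N`-bit binary numbers is at most that of a single draw: `r(N,M) ≤ r(N,1) = N/2`. -/
theorem rExp_le_rExp_one (N M : ℕ) (hN : 1 ≤ N) (hM : 1 ≤ M) :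
    rExp N M ≤ rExp N 1 ∧ rExp N 1 = (N : ℝ) / 2 := by
  have h2N : (0 : ℝ) < (2 : ℝ) ^ N := by positivity
  have h2 : rExp N 1 = (N : ℝ) / 2 := by
    have hsum1 : (∑ x : Fin 1 → Fin (2 ^ N),
          (zeroBits N (Finset.univ.sup (fun m => (x m : ℕ))) : ℝ))
        = ∑ v : Fin (2 ^ N), (zeroBits N (v : ℕ) : ℝ) := by
      apply Fintype.sum_equiv (Equiv.funUnique (Fin 1) (Fin (2 ^ N)))
      intro x
      have : Finset.univ.sup (fun m : Fin 1 => (x m : ℕ)) = (x default : ℕ) := by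
        simp [Finset.univ_unique]
      rw [this]
      rfl
    have hS1 : 2 * ∑ v : Fin (2 ^ N), zeroBits N (v : ℕ) = N * 2 ^ N := by
      simp only [zeroBits]
      rw [sum_zeroBits' N (fun v : Fin (2 ^ N) => (v : ℕ)), Finset.mul_sum,
        Finset.sum_congr rfl (fun i hi => card_filter_eq N i (Finset.mem_range.mp hi))]
      simp [Finset.sum_const, Finset.card_range]
    unfold rExp
    rw [hsum1, pow_one]
    have hcast : (∑ v : Fin (2 ^ N), (zeroBits N (v : ℕ) : ℝ))
        = ((∑ v : Fin (2 ^ N), zeroBits N (v : ℕ) : ℕ) : ℝ) := by push_cast; rfl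
    rw [hcast, div_eq_div_iff (by positivity) (by norm_num : (2 : ℝ) ≠ 0)]
    have := congrArg (fun n : ℕ => (n : ℝ)) hS1
    push_cast at this
    linarith
  have h1 : rExp N M ≤ (N : ℝ) / 2 := by
    have hNat : 2 * ∑ x : Fin M → Fin (2 ^ N),
        zeroBits N (Finset.univ.sup (fun m => (x m : ℕ))) ≤ N * (2 ^ N) ^ M := by
      simp only [zeroBits]
      rw [sum_zeroBits' N (fun x : Fin M → Fin (2 ^ N) =>
        Finset.univ.sup (fun m => (x m : ℕ))), Finset.mul_sum]
      calc ∑ i ∈ Finset.range N, 2 * (Finset.univ.filter (fun x : Fin M → Fin (2 ^ N) =>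
              (Finset.univ.sup (fun m => (x m : ℕ))).testBit i = false)).card
          ≤ ∑ _i ∈ Finset.range N, (2 ^ N) ^ M :=
            Finset.sum_le_sum (fun i hi => card_filter_le N M i (Finset.mem_range.mp hi) hM)
        _ = N * (2 ^ N) ^ M := by simp [Finset.sum_const, Finset.card_range]
    unfold rExp
    rw [div_le_div_iff₀ (by positivity) (by norm_num : (0 : ℝ) < 2)]
    have hcast : (∑ x : Fin M → Fin (2 ^ N),
          (zeroBits N (Finset.univ.sup (fun m => (x m : ℕ))) : ℝ))
        = ((∑ x : Fin M → Fin (2 ^ N),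
            zeroBits N (Finset.univ.sup (fun m => (x m : ℕ))) : ℕ) : ℝ) := by push_cast; rfl
    rw [hcast]
    have : ((2 * ∑ x : Fin M → Fin (2 ^ N),
        zeroBits N (Finset.univ.sup (fun m => (x m : ℕ))) : ℕ) : ℝ)
        ≤ ((N * (2 ^ N) ^ M : ℕ) : ℝ) := Nat.cast_le.mpr hNat
    push_cast at this
    linarith
  exact ⟨h2.symm ▸ h1, h2⟩
end

section
/- For all integers N ≥ 1 and M ≥ 1, r(N,M) ≤ (1/2)·[ ∑_{i=1}^{N} (1 − 1/2^i)^M + (1 − 1/2^N)^M ]. -/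
open Finset

lemma card_sup_le (K M v : ℕ) (hv : v < K) :
    ((Finset.univ.filter
        (fun x : Fin M → Fin K => Finset.univ.sup (fun m => (x m : ℕ)) ≤ v)).card)
      = (v + 1) ^ M := by
  have h1 : (Finset.univ.filter
        (fun x : Fin M → Fin K => Finset.univ.sup (fun m => (x m : ℕ)) ≤ v))
      = Fintype.piFinset (fun _ : Fin M => Finset.univ.filter (fun a : Fin K => (a : ℕ) ≤ v)) := by
    ext x
    simp [Finset.sup_le_iff, Fintype.mem_piFinset]
  have h2 : (Finset.univ.filter (fun a : Fin K => (a : ℕ) ≤ v)) = Finset.Iic (⟨v, hv⟩ : Fin K) := by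
    ext a; simp [Fin.le_def]
  rw [h1, Fintype.card_piFinset]
  simp [h2, Fin.card_Iic]

lemma card_sup_eq (K M v : ℕ) (hM : 1 ≤ M) (hv : v < K) :
    (((Finset.univ.filter
        (fun x : Fin M → Fin K => Finset.univ.sup (fun m => (x m : ℕ)) = v)).card : ℝ))
      = ((v : ℝ) + 1) ^ M - (v : ℝ) ^ M := by
  cases v with
  | zero =>
    have h : (Finset.univ.filter
          (fun x : Fin M → Fin K => Finset.univ.sup (fun m => (x m : ℕ)) = 0))
        = (Finset.univ.filter
          (fun x : Fin M → Fin K => Finset.univ.sup (fun m => (x m : ℕ)) ≤ 0)) := by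
      simp [Nat.le_zero]
    rw [h, card_sup_le K M 0 hv]
    simp [zero_pow (by omega : M ≠ 0)]
  | succ w =>
    have key := Finset.card_filter_add_card_filter_not
      (s := (Finset.univ.filter
        (fun x : Fin M → Fin K => Finset.univ.sup (fun m => (x m : ℕ)) ≤ w + 1)))
      (p := fun x => Finset.univ.sup (fun m => (x m : ℕ)) = w + 1)
    rw [Finset.filter_filter, Finset.filter_filter] at key
    have e1 : (Finset.univ.filter
          (fun x : Fin M → Fin K =>
            Finset.univ.sup (fun m => (x m : ℕ)) ≤ w + 1 ∧
              Finset.univ.sup (fun m => (x m : ℕ)) = w + 1))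
        = (Finset.univ.filter
          (fun x : Fin M → Fin K => Finset.univ.sup (fun m => (x m : ℕ)) = w + 1)) := by
      clear key; ext x; simp only [Finset.mem_filter, Finset.mem_univ, true_and]; omega
    have e2 : (Finset.univ.filter
          (fun x : Fin M → Fin K =>
            Finset.univ.sup (fun m => (x m : ℕ)) ≤ w + 1 ∧
              ¬ Finset.univ.sup (fun m => (x m : ℕ)) = w + 1))
        = (Finset.univ.filter
          (fun x : Fin M → Fin K => Finset.univ.sup (fun m => (x m : ℕ)) ≤ w)) := by
      clear key; ext x; simp only [Finset.mem_filter, Finset.mem_univ, true_and]; omega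
    rw [e1, e2, card_sup_le K M (w+1) hv, card_sup_le K M w (Nat.lt_of_succ_lt hv)] at key
    have := congrArg (fun n : ℕ => (n : ℝ)) key
    push_cast at this ⊢
    linarith

lemma sum_sup_comp (K M : ℕ) (hM : 1 ≤ M) (hK : 0 < K) (F : ℕ → ℝ) :
    ∑ x : Fin M → Fin K, F (Finset.univ.sup (fun m => (x m : ℕ)))
      = ∑ v ∈ Finset.range K, (((v : ℝ) + 1) ^ M - (v : ℝ) ^ M) * F v := by
  have maps : ∀ x : Fin M → Fin K, x ∈ (Finset.univ : Finset (Fin M → Fin K)) →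
      Finset.univ.sup (fun m => (x m : ℕ)) ∈ Finset.range K := by
    intro x _
    rw [Finset.mem_range]
    exact (Finset.sup_lt_iff hK).2 (fun m _ => (x m).isLt)
  rw [← Finset.sum_fiberwise_of_maps_to maps (fun x => F (Finset.univ.sup fun m => (x m : ℕ)))]
  refine Finset.sum_congr rfl fun v hv => ?_
  have hc : ∀ x ∈ Finset.univ.filter
      (fun x : Fin M → Fin K => Finset.univ.sup (fun m => (x m : ℕ)) = v),
      F (Finset.univ.sup fun m => (x m : ℕ)) = F v :=
    fun x hx => by rw [(Finset.mem_filter.1 hx).2]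
  rw [Finset.sum_congr rfl hc, Finset.sum_const, nsmul_eq_mul,
    card_sup_eq K M v hM (Finset.mem_range.1 hv), mul_comm]

lemma sum_range_mul' {β : Type*} [AddCommMonoid β] (f : ℕ → β) (A B : ℕ) :
    ∑ v ∈ Finset.range (A * B), f v
      = ∑ a ∈ Finset.range A, ∑ b ∈ Finset.range B, f (a * B + b) := by
  induction A with
  | zero => simp
  | succ n ih =>
    rw [Nat.succ_mul, Finset.sum_range_add, ih, Finset.sum_range_succ]

lemma testBit_low (a b i : ℕ) (hb : b < 2 ^ i) :
    Nat.testBit (a * 2 ^ (i + 1) + b) i = false := by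
  rw [Nat.testBit_eq_decide_div_mod_eq]
  have h1 : a * 2 ^ (i + 1) + b = b + 2 ^ i * (2 * a) := by ring
  rw [h1, Nat.add_mul_div_left b (2 * a) (pow_pos (by norm_num : (0:ℕ) < 2) i),
    Nat.div_eq_of_lt hb]
  simp [Nat.mul_mod_right]

lemma testBit_high (a b i : ℕ) (hb : b < 2 ^ i) :
    Nat.testBit (a * 2 ^ (i + 1) + 2 ^ i + b) i = true := by
  rw [Nat.testBit_eq_decide_div_mod_eq]
  have h1 : a * 2 ^ (i + 1) + 2 ^ i + b = b + 2 ^ i * (2 * a + 1) := by ring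
  rw [h1, Nat.add_mul_div_left b (2 * a + 1) (pow_pos (by norm_num : (0:ℕ) < 2) i),
    Nat.div_eq_of_lt hb]
  simp [Nat.add_mul_mod_self_left]

lemma convex_step (M : ℕ) (t : ℝ) (ht : 0 ≤ t) :
    2 * (t + 1) ^ M ≤ t ^ M + (t + 2) ^ M := by
  have h := (convexOn_pow (𝕜 := ℝ) M).2 (Set.mem_Ici.2 ht)
    (Set.mem_Ici.2 (by linarith : (0:ℝ) ≤ t + 2))
    (by norm_num : (0:ℝ) ≤ 1/2) (by norm_num : (0:ℝ) ≤ 1/2) (by norm_num)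
  simp only [smul_eq_mul] at h
  have e : (1/2 : ℝ) * t + (1/2) * (t + 2) = t + 1 := by ring
  rw [e] at h
  linarith

lemma sum_odd_diff_le (M n : ℕ) (hM : 1 ≤ M) :
    ∑ a ∈ Finset.range (n + 1), (((2 * a + 1 : ℕ) : ℝ) ^ M - ((2 * a : ℕ) : ℝ) ^ M)
      ≤ ((2 * n + 1 : ℕ) : ℝ) ^ M - (1 / 2) * ((2 * n : ℕ) : ℝ) ^ M := by
  rw [Finset.sum_range_succ]
  have h1 : ∑ a ∈ Finset.range n, (((2 * a + 1 : ℕ) : ℝ) ^ M - ((2 * a : ℕ) : ℝ) ^ M)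
      ≤ (1 / 2) * ∑ a ∈ Finset.range n, (((2 * (a + 1) : ℕ) : ℝ) ^ M - ((2 * a : ℕ) : ℝ) ^ M) := by
    rw [Finset.mul_sum]
    refine Finset.sum_le_sum fun a _ => ?_
    have hc := convex_step M (2 * a : ℕ) (by positivity)
    push_cast at hc ⊢
    have e : (2 * ((a : ℝ) + 1)) = 2 * (a : ℝ) + 2 := by ring
    rw [e]
    linarith
  have h2 : ∑ a ∈ Finset.range n, (((2 * (a + 1) : ℕ) : ℝ) ^ M - ((2 * a : ℕ) : ℝ) ^ M)
      = ((2 * n : ℕ) : ℝ) ^ M := by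
    have := Finset.sum_range_sub (fun a => ((2 * a : ℕ) : ℝ) ^ M) n
    rw [this]
    norm_num [zero_pow (by omega : M ≠ 0)]
  rw [h2] at h1
  push_cast at h1 ⊢
  nlinarith [h1]

lemma bit_sum (N M i : ℕ) (hi : i < N) :
    ∑ v ∈ Finset.range (2 ^ N),
        (if Nat.testBit v i = false then ((v : ℝ) + 1) ^ M - (v : ℝ) ^ M else 0)
      = ∑ a ∈ Finset.range (2 ^ (N - 1 - i)),
          (((a * 2 ^ (i + 1) + 2 ^ i : ℕ) : ℝ) ^ M - ((a * 2 ^ (i + 1) : ℕ) : ℝ) ^ M) := by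
  have hN : 2 ^ N = 2 ^ (N - 1 - i) * 2 ^ (i + 1) := by
    rw [← pow_add]; congr 1; omega
  rw [hN, sum_range_mul']
  refine Finset.sum_congr rfl fun a _ => ?_
  have h2 : Finset.range (2 ^ (i + 1)) = Finset.range (2 ^ i + 2 ^ i) := by
    congr 1; rw [pow_succ]; ring
  rw [h2, Finset.sum_range_add]
  have hlow : ∀ b ∈ Finset.range (2 ^ i),
      (if Nat.testBit (a * 2 ^ (i + 1) + b) i = false
        then (((a * 2 ^ (i + 1) + b : ℕ) : ℝ) + 1) ^ M - ((a * 2 ^ (i + 1) + b : ℕ) : ℝ) ^ M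
        else 0)
      = (fun b => ((a * 2 ^ (i + 1) + b : ℕ) : ℝ) ^ M) (b + 1)
          - (fun b => ((a * 2 ^ (i + 1) + b : ℕ) : ℝ) ^ M) b := by
    intro b hb
    rw [testBit_low a b i (Finset.mem_range.1 hb)]
    simp only [if_pos rfl]
    push_cast
    ring_nf
  have hhigh : ∀ b ∈ Finset.range (2 ^ i),
      (if Nat.testBit (a * 2 ^ (i + 1) + (2 ^ i + b)) i = false
        then (((a * 2 ^ (i + 1) + (2 ^ i + b) : ℕ) : ℝ) + 1) ^ M
            - ((a * 2 ^ (i + 1) + (2 ^ i + b) : ℕ) : ℝ) ^ M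
        else 0) = 0 := by
    intro b hb
    have : a * 2 ^ (i + 1) + (2 ^ i + b) = a * 2 ^ (i + 1) + 2 ^ i + b := by ring
    rw [this, testBit_high a b i (Finset.mem_range.1 hb)]
    simp
  rw [Finset.sum_congr rfl hlow, Finset.sum_congr rfl hhigh,
    Finset.sum_range_sub (fun b => ((a * 2 ^ (i + 1) + b : ℕ) : ℝ) ^ M) (2 ^ i)]
  simp

lemma bit_bound (N M i : ℕ) (hM : 1 ≤ M) (hi : i < N) :
    ∑ a ∈ Finset.range (2 ^ (N - 1 - i)),
        (((a * 2 ^ (i + 1) + 2 ^ i : ℕ) : ℝ) ^ M - ((a * 2 ^ (i + 1) : ℕ) : ℝ) ^ M)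
      ≤ ((2 : ℝ) ^ N) ^ M *
          ((1 - 1 / 2 ^ (N - i)) ^ M - (1 / 2) * (1 - 1 / 2 ^ (N - i - 1)) ^ M) := by
  obtain ⟨n, hn⟩ : ∃ n, 2 ^ (N - 1 - i) = n + 1 :=
    ⟨2 ^ (N - 1 - i) - 1, by have := pow_pos (show 0 < 2 by norm_num) (N - 1 - i); omega⟩
  -- Nat facts
  have hpow1 : 2 ^ i * 2 ^ (N - i) = 2 ^ N := by rw [← pow_add]; congr 1; omega
  have hpow2 : 2 ^ (i + 1) * 2 ^ (N - i - 1) = 2 ^ N := by rw [← pow_add]; congr 1; omega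
  have hpow3 : 2 ^ (N - i) = 2 * 2 ^ (N - 1 - i) := by
    rw [← pow_succ']; congr 1; omega
  have hA : 2 ^ i * (2 * n + 1) + 2 ^ i = 2 ^ N := by
    have : 2 ^ i * (2 * n + 1) + 2 ^ i = 2 ^ i * (2 * (n + 1)) := by ring
    rw [this, ← hn, ← hpow3]
    exact hpow1
  have hB : 2 ^ i * (2 * n) + 2 ^ (i + 1) = 2 ^ N := by
    have : 2 ^ i * (2 * n) + 2 ^ (i + 1) = 2 ^ i * (2 * (n + 1)) := by ring
    rw [this, ← hn, ← hpow3]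
    exact hpow1
  -- Real versions
  have c1 : (2 : ℝ) ^ i * (2 : ℝ) ^ (N - i) = (2 : ℝ) ^ N := by
    rw [← pow_add]; congr 1; omega
  have c2 : (2 : ℝ) ^ (i + 1) * (2 : ℝ) ^ (N - i - 1) = (2 : ℝ) ^ N := by
    rw [← pow_add]; congr 1; omega
  have hne1 : ((2 : ℝ) ^ (N - i)) ≠ 0 := by positivity
  have hne2 : ((2 : ℝ) ^ (N - i - 1)) ≠ 0 := by positivity
  have d1 : (2 : ℝ) ^ N * (1 / 2 ^ (N - i)) = 2 ^ i := by
    field_simp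
    linarith [c1]
  have d2 : (2 : ℝ) ^ N * (1 / 2 ^ (N - i - 1)) = 2 ^ (i + 1) := by
    field_simp
    linarith [c2]
  have hAr : (2 : ℝ) ^ i * (2 * (n : ℝ) + 1) + 2 ^ i = 2 ^ N := by
    have := congrArg (fun k : ℕ => (k : ℝ)) hA
    push_cast at this
    linarith [this]
  have hBr : (2 : ℝ) ^ i * (2 * (n : ℝ)) + 2 ^ (i + 1) = 2 ^ N := by
    have := congrArg (fun k : ℕ => (k : ℝ)) hB
    push_cast at this
    linarith [this]
  have e1 : (2 : ℝ) ^ N * (1 - 1 / 2 ^ (N - i)) = (2 : ℝ) ^ i * ((2 * n + 1 : ℕ) : ℝ) := by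
    push_cast
    rw [mul_sub, d1]
    linarith [hAr]
  have e2 : (2 : ℝ) ^ N * (1 - 1 / 2 ^ (N - i - 1)) = (2 : ℝ) ^ i * ((2 * n : ℕ) : ℝ) := by
    push_cast
    rw [mul_sub, d2]
    have : (2:ℝ) ^ (i+1) = 2 * 2 ^ i := by rw [pow_succ]; ring
    rw [this] at hBr ⊢
    linarith [hBr]
  have key : ((2 : ℝ) ^ N) ^ M *
        ((1 - 1 / 2 ^ (N - i)) ^ M - (1 / 2) * (1 - 1 / 2 ^ (N - i - 1)) ^ M)
      = ((2 : ℝ) ^ i) ^ M * (((2 * n + 1 : ℕ) : ℝ) ^ M - (1 / 2) * ((2 * n : ℕ) : ℝ) ^ M) := by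
    rw [mul_sub, ← mul_pow, e1, mul_pow]
    have h3 : ((2 : ℝ) ^ N) ^ M * (1 / 2 * (1 - 1 / 2 ^ (N - i - 1)) ^ M)
        = 1 / 2 * ((2 : ℝ) ^ N * (1 - 1 / 2 ^ (N - i - 1))) ^ M := by
      rw [mul_pow]; ring
    rw [h3, e2, mul_pow]
    ring
  rw [key]
  have lhs_eq : ∑ a ∈ Finset.range (2 ^ (N - 1 - i)),
        (((a * 2 ^ (i + 1) + 2 ^ i : ℕ) : ℝ) ^ M - ((a * 2 ^ (i + 1) : ℕ) : ℝ) ^ M)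
      = ((2 : ℝ) ^ i) ^ M * ∑ a ∈ Finset.range (n + 1),
          (((2 * a + 1 : ℕ) : ℝ) ^ M - ((2 * a : ℕ) : ℝ) ^ M) := by
    rw [hn, Finset.mul_sum]
    refine Finset.sum_congr rfl fun a _ => ?_
    have u1 : a * 2 ^ (i + 1) + 2 ^ i = (2 * a + 1) * 2 ^ i := by rw [pow_succ]; ring
    have u2 : a * 2 ^ (i + 1) = (2 * a) * 2 ^ i := by rw [pow_succ]; ring
    rw [u1, u2]
    push_cast
    rw [mul_pow, mul_pow]
    ring
  rw [lhs_eq]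
  have hS := sum_odd_diff_le M n hM
  have hpos : (0 : ℝ) ≤ ((2 : ℝ) ^ i) ^ M := by positivity
  calc ((2 : ℝ) ^ i) ^ M * ∑ a ∈ Finset.range (n + 1),
          (((2 * a + 1 : ℕ) : ℝ) ^ M - ((2 * a : ℕ) : ℝ) ^ M)
      ≤ ((2 : ℝ) ^ i) ^ M * (((2 * n + 1 : ℕ) : ℝ) ^ M - (1 / 2) * ((2 * n : ℕ) : ℝ) ^ M) :=
        mul_le_mul_of_nonneg_left hS hpos
    _ = ((2 : ℝ) ^ i) ^ M * (((2 * n + 1 : ℕ) : ℝ) ^ M - 1 / 2 * ((2 * n : ℕ) : ℝ) ^ M) := by ring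

/-- For all `N ≥ 1` and `M ≥ 1`,
`r(N,M) ≤ (1/2)·[ ∑_{i=1}^{N} (1 - 1/2^i)^M + (1 - 1/2^N)^M ]`. -/
theorem rExp_le_half_sum (N M : ℕ) (hN : 1 ≤ N) (hM : 1 ≤ M) :
    rExp N M ≤
      (1 / 2) * ((∑ i ∈ Finset.Icc 1 N, (1 - 1 / (2 : ℝ) ^ i) ^ M)
        + (1 - 1 / (2 : ℝ) ^ N) ^ M) := by
  have hKpos : (0:ℝ) < ((2:ℝ) ^ N) ^ M := by positivity
  have h0 : (∑ x : Fin M → Fin (2 ^ N),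
        (zeroBits N (Finset.univ.sup (fun m => (x m : ℕ))) : ℝ))
      = ∑ v ∈ Finset.range (2 ^ N), (((v:ℝ)+1) ^ M - (v:ℝ) ^ M) * (zeroBits N v : ℝ) :=
    sum_sup_comp (2 ^ N) M hM (pow_pos (by norm_num : (0:ℕ) < 2) N)
      (fun v => (zeroBits N v : ℝ))
  have h1 : ∀ v : ℕ, (zeroBits N v : ℝ)
      = ∑ i ∈ Finset.range N, (if Nat.testBit v i = false then (1:ℝ) else 0) := by
    intro v
    rw [zeroBits, Finset.card_filter]
    push_cast
    rfl
  have h2 : ∑ v ∈ Finset.range (2 ^ N), (((v:ℝ)+1) ^ M - (v:ℝ) ^ M) * (zeroBits N v : ℝ)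
      = ∑ i ∈ Finset.range N, ∑ v ∈ Finset.range (2 ^ N),
          (if Nat.testBit v i = false then ((v:ℝ)+1) ^ M - (v:ℝ) ^ M else 0) := by
    have hv : ∀ v ∈ Finset.range (2 ^ N), (((v:ℝ)+1) ^ M - (v:ℝ) ^ M) * (zeroBits N v : ℝ)
        = ∑ i ∈ Finset.range N,
            (if Nat.testBit v i = false then ((v:ℝ)+1) ^ M - (v:ℝ) ^ M else 0) := by
      intro v _
      rw [h1 v, Finset.mul_sum]
      refine Finset.sum_congr rfl fun i _ => ?_
      split <;> simp
    rw [Finset.sum_congr rfl hv, Finset.sum_comm]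
  have h3 : ∀ i ∈ Finset.range N,
      ∑ v ∈ Finset.range (2 ^ N),
          (if Nat.testBit v i = false then ((v:ℝ)+1) ^ M - (v:ℝ) ^ M else 0)
        ≤ ((2:ℝ) ^ N) ^ M * ((1 - 1 / 2 ^ (N - i)) ^ M
            - (1/2) * (1 - 1 / 2 ^ (N - i - 1)) ^ M) := by
    intro i hi
    rw [bit_sum N M i (Finset.mem_range.1 hi)]
    exact bit_bound N M i hM (Finset.mem_range.1 hi)
  have h4 : ∑ i ∈ Finset.range N, ((2:ℝ) ^ N) ^ M * ((1 - 1 / 2 ^ (N - i)) ^ M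
            - (1/2) * (1 - 1 / 2 ^ (N - i - 1)) ^ M)
      = ((2:ℝ) ^ N) ^ M * ((1/2) * ((∑ i ∈ Finset.Icc 1 N, (1 - 1 / (2:ℝ) ^ i) ^ M)
          + (1 - 1 / (2:ℝ) ^ N) ^ M)) := by
    rw [← Finset.mul_sum]
    congr 1
    have hrefl := Finset.sum_range_reflect
      (fun i => (1 - 1 / (2:ℝ) ^ (N - i)) ^ M - (1/2) * (1 - 1 / (2:ℝ) ^ (N - i - 1)) ^ M) N
    rw [← hrefl]
    have r1 : ∀ i ∈ Finset.range N,
        ((1 - 1 / (2:ℝ) ^ (N - (N - 1 - i))) ^ M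
            - (1/2) * (1 - 1 / (2:ℝ) ^ (N - (N - 1 - i) - 1)) ^ M)
          = ((1 - 1 / (2:ℝ) ^ (i + 1)) ^ M - (1/2) * (1 - 1 / (2:ℝ) ^ i) ^ M) := by
      intro i hi
      have hi' := Finset.mem_range.1 hi
      have q1 : N - (N - 1 - i) = i + 1 := by omega
      have q2 : N - (N - 1 - i) - 1 = i := by omega
      rw [q1, Nat.add_sub_cancel]
    rw [Finset.sum_congr rfl r1, Finset.sum_sub_distrib]
    obtain ⟨P, hP⟩ : ∃ P, N = P + 1 := ⟨N - 1, by omega⟩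
    subst hP
    have c1 : (∑ i ∈ Finset.Icc 1 (P + 1), (1 - 1 / (2:ℝ) ^ i) ^ M)
        = ∑ i ∈ Finset.range (P + 1), (1 - 1 / (2:ℝ) ^ (i + 1)) ^ M := by
      rw [← Finset.Ico_add_one_right_eq_Icc, Finset.sum_Ico_eq_sum_range]
      simp only [Nat.add_sub_cancel, Nat.succ_sub_one]
      exact Finset.sum_congr rfl fun i _ => by rw [add_comm]
    have c2 : ∑ i ∈ Finset.range (P + 1), (1 - 1 / (2:ℝ) ^ i) ^ M
        = ∑ i ∈ Finset.range P, (1 - 1 / (2:ℝ) ^ (i + 1)) ^ M := by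
      rw [Finset.sum_range_succ']
      norm_num [zero_pow (by omega : M ≠ 0)]
    have c3 : ∑ i ∈ Finset.range (P + 1), (1 - 1 / (2:ℝ) ^ (i + 1)) ^ M
        = ∑ i ∈ Finset.range P, (1 - 1 / (2:ℝ) ^ (i + 1)) ^ M
            + (1 - 1 / (2:ℝ) ^ (P + 1)) ^ M := Finset.sum_range_succ _ _
    rw [c1, ← Finset.mul_sum, c2]
    linarith [c3]
  rw [rExp, h0, h2, div_le_iff₀ hKpos]
  calc ∑ i ∈ Finset.range N, ∑ v ∈ Finset.range (2 ^ N),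
          (if Nat.testBit v i = false then ((v:ℝ)+1) ^ M - (v:ℝ) ^ M else 0)
      ≤ ∑ i ∈ Finset.range N, ((2:ℝ) ^ N) ^ M * ((1 - 1 / 2 ^ (N - i)) ^ M
            - (1/2) * (1 - 1 / 2 ^ (N - i - 1)) ^ M) := Finset.sum_le_sum h3
    _ = ((2:ℝ) ^ N) ^ M * ((1/2) * ((∑ i ∈ Finset.Icc 1 N, (1 - 1 / (2:ℝ) ^ i) ^ M)
          + (1 - 1 / (2:ℝ) ^ N) ^ M)) := h4
    _ = (1/2) * ((∑ i ∈ Finset.Icc 1 N, (1 - 1 / (2:ℝ) ^ i) ^ M)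
          + (1 - 1 / (2:ℝ) ^ N) ^ M) * ((2:ℝ) ^ N) ^ M := by ring
end

section
/- For every integer N ≥ 2, with M = ⌈2^N / N⌉, the inequality ∑_{i=1}^{N} (1 − 1/2^i)^M + (1 − 1/2^N)^M < ⌈log₂ N⌉ + 0.91 holds. -/
set_option maxHeartbeats 1000000

open Finset Real

lemma exp_neg_le_quad {x : ℝ} (hx : 0 ≤ x) :
    Real.exp (-x) ≤ 1 - x + x ^ 2 / 2 := by
  have h := Real.quadratic_le_exp_of_nonneg hx
  have hm : Real.exp (-x) * Real.exp x = 1 := by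
    rw [← Real.exp_add]; simp
  nlinarith [Real.exp_pos (-x), sq_nonneg (x ^ 2), sq_nonneg x,
    mul_pos (Real.exp_pos (-x)) (Real.exp_pos x)]

/-- For every integer `N ≥ 2`, with `M = ⌈2^N / N⌉`,
`∑_{i=1}^{N} (1 - 1/2^i)^M + (1 - 1/2^N)^M < ⌈log₂ N⌉ + 0.91`. -/
theorem sum_pow_lt_clog_add (N M : ℕ) (hN : 2 ≤ N)
    (hM : M = ⌈((2 : ℝ) ^ N / (N : ℝ))⌉₊) :
    (∑ i ∈ Finset.Icc 1 N, (1 - 1 / (2 : ℝ) ^ i) ^ M) + (1 - 1 / (2 : ℝ) ^ N) ^ M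
      < (Nat.clog 2 N : ℝ) + 0.91 := by
  set L := Nat.clog 2 N with hLdef
  have hL1 : 1 ≤ L := Nat.clog_pos one_lt_two hN
  have hNle : (N : ℝ) ≤ 2 ^ L := by exact_mod_cast Nat.le_pow_clog one_lt_two N
  have hLN : L ≤ N := (Nat.clog_le_iff_le_pow one_lt_two).2 (Nat.lt_two_pow_self (n := N)).le
  have hNpos : (0 : ℝ) < N := by positivity
  have h2L : (0 : ℝ) < 2 ^ L := by positivity
  have hMge : (2 : ℝ) ^ N / 2 ^ L ≤ M := by
    have h1 : (2 : ℝ) ^ N / N ≤ M := by rw [hM]; exact Nat.le_ceil _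
    have h2 : (2 : ℝ) ^ N / 2 ^ L ≤ (2 : ℝ) ^ N / N := by gcongr
    linarith
  -- per-term bound
  have key : ∀ i, 1 ≤ i → i ≤ N →
      (1 - 1 / (2 : ℝ) ^ i) ^ M ≤ Real.exp (-((2 : ℝ) ^ (N - i) / 2 ^ L)) := by
    intro i hi1 hiN
    have h2i : (0 : ℝ) < 2 ^ i := by positivity
    have hx0 : (0 : ℝ) ≤ 1 - 1 / 2 ^ i := by
      have h1 : (1 : ℝ) ≤ 2 ^ i := one_le_pow₀ (by norm_num)
      have : (1 : ℝ) / 2 ^ i ≤ 1 := by rw [div_le_one h2i]; exact h1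
      linarith
    have step1 : (1 - 1 / (2 : ℝ) ^ i) ^ M ≤ Real.exp (-(1 / 2 ^ i)) ^ M := by
      apply pow_le_pow_left₀ hx0
      have := Real.add_one_le_exp (-(1 / (2 : ℝ) ^ i))
      linarith
    rw [← Real.exp_nat_mul] at step1
    refine step1.trans (Real.exp_le_exp.2 ?_)
    rw [mul_neg, neg_le_neg_iff]
    have hpow : (2 : ℝ) ^ (N - i) * 2 ^ i = 2 ^ N := pow_sub_mul_pow 2 hiN
    have heq : (2 : ℝ) ^ (N - i) / 2 ^ L = ((2 : ℝ) ^ N / 2 ^ L) / 2 ^ i := by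
      field_simp
      rw [← hpow]
    rw [heq, mul_one_div]
    gcongr
  -- sum of the bounds, reindexed
  have hsum1 : ∑ i ∈ Icc 1 N, (1 - 1 / (2 : ℝ) ^ i) ^ M
      ≤ ∑ i ∈ Icc 1 N, Real.exp (-((2 : ℝ) ^ (N - i) / 2 ^ L)) := by
    apply Finset.sum_le_sum
    intro i hi
    obtain ⟨h1, h2⟩ := Finset.mem_Icc.1 hi
    exact key i h1 h2
  have hre : ∑ i ∈ Icc 1 N, Real.exp (-((2:ℝ) ^ (N - i) / 2 ^ L))
      = ∑ j ∈ range N, Real.exp (-((2:ℝ) ^ j / 2 ^ L)) := by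
    rw [← Finset.Ico_add_one_right_eq_Icc, Finset.sum_Ico_eq_sum_range, ← Finset.sum_range_reflect]
    apply Finset.sum_congr (by norm_num)
    intro j hj
    simp only [Finset.mem_range] at hj
    have h : N - (1 + (N + 1 - 1 - 1 - j)) = j := by omega
    rw [h]
  have hsplit : ∑ j ∈ range N, Real.exp (-((2:ℝ) ^ j / 2 ^ L))
      = ∑ j ∈ range L, Real.exp (-((2:ℝ) ^ j / 2 ^ L))
      + ∑ j ∈ Ico L N, Real.exp (-((2:ℝ) ^ j / 2 ^ L)) := by
    rw [Finset.range_eq_Ico, Finset.range_eq_Ico]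
    exact (Finset.sum_Ico_consecutive _ (Nat.zero_le L) hLN).symm
  -- low part
  have low : ∑ j ∈ range L, Real.exp (-((2:ℝ) ^ j / 2 ^ L))
      ≤ (L : ℝ) - 1 + 1 / 2 ^ L + 1 / 6 := by
    have h1 : ∑ j ∈ range L, Real.exp (-((2:ℝ) ^ j / 2 ^ L))
        ≤ ∑ j ∈ range L, (1 - (2:ℝ) ^ j / 2 ^ L + ((2:ℝ) ^ j / 2 ^ L) ^ 2 / 2) := by
      apply Finset.sum_le_sum
      intro j _
      exact exp_neg_le_quad (by positivity)
    have h2 : ∑ j ∈ range L, ((2:ℝ) ^ j) = 2 ^ L - 1 := by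
      rw [geom_sum_eq (by norm_num : (2:ℝ) ≠ 1) L]; norm_num
    have h3 : ∑ j ∈ range L, ((2:ℝ) ^ j) ^ 2 = (4 ^ L - 1) / 3 := by
      have hj : ∀ j, ((2:ℝ) ^ j) ^ 2 = 4 ^ j := by
        intro j; rw [← pow_mul, mul_comm, pow_mul]; norm_num
      rw [Finset.sum_congr rfl (fun j _ => hj j), geom_sum_eq (by norm_num : (4:ℝ) ≠ 1) L]
      norm_num
    have h4 : ∑ j ∈ range L, (1 - (2:ℝ) ^ j / 2 ^ L + ((2:ℝ) ^ j / 2 ^ L) ^ 2 / 2)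
        = (L : ℝ) - (2 ^ L - 1) / 2 ^ L + ((4 ^ L - 1) / 3) / ((2 ^ L) ^ 2 * 2) := by
      have a : ∑ j ∈ range L, ((2:ℝ) ^ j / 2 ^ L) = (2 ^ L - 1) / 2 ^ L := by
        rw [← Finset.sum_div, h2]
      have b : ∑ j ∈ range L, (((2:ℝ) ^ j / 2 ^ L) ^ 2 / 2)
          = ((4 ^ L - 1) / 3) / ((2 ^ L) ^ 2 * 2) := by
        simp only [div_pow, div_div]
        rw [← Finset.sum_div, h3, div_div]
      rw [Finset.sum_add_distrib, Finset.sum_sub_distrib, Finset.sum_const,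
        Finset.card_range, nsmul_eq_mul, mul_one, a, b]
    have h5 : ((2:ℝ) ^ L) ^ 2 = 4 ^ L := by
      rw [← pow_mul, mul_comm, pow_mul]; norm_num
    have h4L : (0:ℝ) < 4 ^ L := by positivity
    have e1 : ((2:ℝ) ^ L - 1) / 2 ^ L = 1 - 1 / 2 ^ L := by field_simp
    have e2 : (((4:ℝ) ^ L - 1) / 3) / ((2 ^ L) ^ 2 * 2) ≤ 1 / 6 := by
      rw [h5, div_le_iff₀ (by positivity)]
      nlinarith
    calc ∑ j ∈ range L, Real.exp (-((2:ℝ) ^ j / 2 ^ L))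
        ≤ ∑ j ∈ range L, (1 - (2:ℝ) ^ j / 2 ^ L + ((2:ℝ) ^ j / 2 ^ L) ^ 2 / 2) := h1
      _ = (L : ℝ) - (2 ^ L - 1) / 2 ^ L + ((4 ^ L - 1) / 3) / ((2 ^ L) ^ 2 * 2) := h4
      _ ≤ (L : ℝ) - 1 + 1 / 2 ^ L + 1 / 6 := by rw [e1]; linarith
  -- facts about exp(-1)
  have hE : (2.7182818283 : ℝ) < Real.exp 1 := Real.exp_one_gt_d9
  have hmul : Real.exp (-1) * Real.exp 1 = 1 := by rw [← Real.exp_add]; simp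
  have hr0 : (0:ℝ) < Real.exp (-1) := Real.exp_pos _
  have hr1 : Real.exp (-1) < 1/2 := by nlinarith
  -- high part
  have high : ∑ j ∈ Ico L N, Real.exp (-((2:ℝ) ^ j / 2 ^ L))
      ≤ Real.exp (-1) * (1 / (1 - Real.exp (-1))) := by
    have h1 : ∀ j ∈ Ico L N,
        Real.exp (-((2:ℝ) ^ j / 2 ^ L)) ≤ Real.exp (-1) ^ (j - L + 1) := by
      intro j hj
      obtain ⟨hjL, hjN⟩ := Finset.mem_Ico.1 hj
      rw [← Real.exp_nat_mul]
      apply Real.exp_le_exp.2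
      have hpow : (2:ℝ) ^ (j - L) * 2 ^ L = 2 ^ j := pow_sub_mul_pow 2 hjL
      have hdiv : (2:ℝ) ^ j / 2 ^ L = 2 ^ (j - L) := by
        rw [eq_comm, eq_div_iff h2L.ne', hpow]
      have hge : ((j - L + 1 : ℕ) : ℝ) ≤ 2 ^ (j - L) := by
        exact_mod_cast Nat.succ_le_of_lt (Nat.lt_two_pow_self (n := j - L))
      rw [hdiv]
      nlinarith
    have h2 : ∑ j ∈ Ico L N, Real.exp (-1) ^ (j - L + 1)
        = Real.exp (-1) * ∑ k ∈ range (N - L), Real.exp (-1) ^ k := by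
      rw [Finset.sum_Ico_eq_sum_range, Finset.mul_sum]
      apply Finset.sum_congr rfl
      intro k _
      have h : L + k - L + 1 = k + 1 := by omega
      rw [h, pow_succ, mul_comm]
    have h3 : ∑ k ∈ range (N - L), Real.exp (-1) ^ k ≤ 1 / (1 - Real.exp (-1)) := by
      rw [geom_sum_eq (by linarith : Real.exp (-1) ≠ 1)]
      have hd : Real.exp (-1) ^ (N - L) ≥ 0 := by positivity
      have heq : (Real.exp (-1) ^ (N - L) - 1) / (Real.exp (-1) - 1)
          = (1 - Real.exp (-1) ^ (N - L)) / (1 - Real.exp (-1)) := by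
        rw [← neg_div_neg_eq]; ring_nf
      rw [heq]
      gcongr
      · linarith
      · linarith
    calc ∑ j ∈ Ico L N, Real.exp (-((2:ℝ) ^ j / 2 ^ L))
        ≤ ∑ j ∈ Ico L N, Real.exp (-1) ^ (j - L + 1) := Finset.sum_le_sum h1
      _ = Real.exp (-1) * ∑ k ∈ range (N - L), Real.exp (-1) ^ k := h2
      _ ≤ Real.exp (-1) * (1 / (1 - Real.exp (-1))) := by
          apply mul_le_mul_of_nonneg_left h3 hr0.le
  have hgeo : Real.exp (-1) * (1 / (1 - Real.exp (-1))) < 0.5821 := by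
    rw [mul_one_div, div_lt_iff₀ (by linarith)]
    nlinarith
  -- extra term
  have extra : (1 - 1 / (2 : ℝ) ^ N) ^ M ≤ 1 - 1 / 2 ^ L + (1 / 2 ^ L) ^ 2 / 2 := by
    have h := key N (by omega) le_rfl
    rw [Nat.sub_self, pow_zero] at h
    refine h.trans ?_
    exact exp_neg_le_quad (by positivity)
  have hhalf : (1:ℝ) / 2 ^ L ≤ 1 / 2 := by
    have h2Lge : (2:ℝ) ≤ 2 ^ L := by
      calc (2:ℝ) = 2 ^ 1 := by norm_num
        _ ≤ 2 ^ L := pow_le_pow_right₀ (by norm_num) hL1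
    rw [div_le_div_iff₀ h2L (by norm_num)]
    linarith
  have hq : ((1:ℝ) / 2 ^ L) ^ 2 / 2 ≤ 1 / 8 := by
    have h0 : (0:ℝ) ≤ 1 / 2 ^ L := by positivity
    nlinarith
  -- assemble
  have main : ∑ i ∈ Finset.Icc 1 N, (1 - 1 / (2 : ℝ) ^ i) ^ M
      ≤ ((L : ℝ) - 1 + 1 / 2 ^ L + 1 / 6) + Real.exp (-1) * (1 / (1 - Real.exp (-1))) := by
    calc ∑ i ∈ Finset.Icc 1 N, (1 - 1 / (2 : ℝ) ^ i) ^ M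
        ≤ ∑ i ∈ Icc 1 N, Real.exp (-((2 : ℝ) ^ (N - i) / 2 ^ L)) := hsum1
      _ = ∑ j ∈ range L, Real.exp (-((2:ℝ) ^ j / 2 ^ L))
          + ∑ j ∈ Ico L N, Real.exp (-((2:ℝ) ^ j / 2 ^ L)) := by rw [hre, hsplit]
      _ ≤ ((L : ℝ) - 1 + 1 / 2 ^ L + 1 / 6) + Real.exp (-1) * (1 / (1 - Real.exp (-1))) :=
          add_le_add low high
  have : (1 - 1 / (2 : ℝ) ^ N) ^ M ≤ 1 - 1 / 2 ^ L + 1 / 8 := by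
    refine extra.trans ?_
    linarith
  linarith
end

section
/- In the single-ranking training-data setup with N ≥ 3 products and T i.i.d. uniformly sampled assortments, P( H_1 < 0.512041·T ) < 4·exp(−T/145), where H_1 = n^1 + ( ∑_{k ∈ {0,2,3,…,N}} (n_k^{−1})² )/(T − n^1). -/
open scoped Classical

noncomputable section

/-- Product `j` (with `1`-based label `j`) belongs to the assortment `S ⊆ Fin N`
(where the element `l : Fin N` represents the product with label `l + 1`). -/
def lmem (N : ℕ) (j : ℕ) (S : Finset (Fin N)) : Prop :=
  ∃ l ∈ S, (l : ℕ) + 1 = j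

/-- The choice of a customer with preference ranking `1 ≻ 2 ≻ ⋯ ≻ N ≻ 0` from assortment `S`:
the label of the most preferred (smallest-label) product of `S`, and `0` (no purchase) if `S`
is empty. -/
def choiceLabel {N : ℕ} (S : Finset (Fin N)) : ℕ :=
  if h : S.Nonempty then (S.min' h : ℕ) + 1 else 0

/-- `n^1`: the number of assortments in the data containing product `1`. -/
def nIn1 (N T : ℕ) (ω : Fin T → Finset (Fin N)) : ℕ :=
  (Finset.univ.filter (fun t => lmem N 1 (ω t))).card

/-- `n_k^{-1}`: the number of assortments in the data not containing product `1` whose choice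
is `k`. -/
def nOutCh1 (N T : ℕ) (ω : Fin T → Finset (Fin N)) (k : ℕ) : ℕ :=
  (Finset.univ.filter (fun t => ¬ lmem N 1 (ω t) ∧ choiceLabel (ω t) = k)).card

/-- `H_1 = n^1 + ( ∑_{k ∈ {0,2,3,…,N}} (n_k^{-1})² )/(T - n^1)`, with the convention that a
fraction with zero denominator equals `0` (as in Lean's division). -/
def H1 (N T : ℕ) (ω : Fin T → Finset (Fin N)) : ℝ :=
  (nIn1 N T ω : ℝ)
    + (∑ k ∈ (insert 0 (Finset.Icc 1 N)).erase 1, (nOutCh1 N T ω k : ℝ) ^ 2)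
      / ((T : ℝ) - (nIn1 N T ω : ℝ))

open Finset

/-! ### Numeric lemmas -/

lemma aux_num1 : Real.exp (200/29 : ℝ) ≤ 1050 := by
  have h29 : Real.exp (200/29 : ℝ) ^ 29 = Real.exp 200 := by
    rw [← Real.exp_nat_mul]; norm_num
  have h1 : Real.exp 200 ≤ (2.7182818286 : ℝ) ^ 200 := by
    rw [show (200:ℝ) = ((200:ℕ):ℝ) by norm_num, ← Real.exp_one_rpow,
      Real.rpow_natCast]
    exact pow_le_pow_left₀ (Real.exp_pos 1).le Real.exp_one_lt_d9.le 200
  have h2 : (2.7182818286 : ℝ) ^ 200 ≤ (1050:ℝ) ^ 29 := by norm_num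
  have h3 : Real.exp (200/29 : ℝ) ^ 29 ≤ (1050:ℝ) ^ 29 := by
    rw [h29]; exact h1.trans h2
  exact (pow_le_pow_iff_left₀ (Real.exp_pos _).le (by norm_num : (0:ℝ) ≤ 1050)
    (by norm_num : (29:ℕ) ≠ 0)).mp h3

lemma aux_num2 : Real.exp (1/29 : ℝ) ≤ 786432/759375 := by
  have h29 : Real.exp (1/29 : ℝ) ^ 29 = Real.exp 1 := by
    rw [← Real.exp_nat_mul]; norm_num
  have h3 : Real.exp (1/29 : ℝ) ^ 29 ≤ ((786432:ℝ)/759375) ^ 29 := by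
    rw [h29]
    calc Real.exp 1 ≤ 2.7182818286 := Real.exp_one_lt_d9.le
      _ ≤ ((786432:ℝ)/759375) ^ 29 := by norm_num
  exact (pow_le_pow_iff_left₀ (Real.exp_pos _).le (by norm_num)
    (by norm_num : (29:ℕ) ≠ 0)).mp h3

lemma aux_baseX : (0.895:ℝ) ≤ Real.exp (-(1/145)) * (0.79:ℝ) ^ (0.441:ℝ) := by
  have hr : (0:ℝ) ≤ (0.79:ℝ) ^ (0.441:ℝ) := Real.rpow_nonneg (by norm_num) _
  have hrhs : (0:ℝ) ≤ Real.exp (-(1/145)) * (0.79:ℝ) ^ (0.441:ℝ) :=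
    mul_nonneg (Real.exp_pos _).le hr
  refine (pow_le_pow_iff_left₀ (by norm_num) hrhs (by norm_num : (1000:ℕ) ≠ 0)).mp ?_
  rw [mul_pow, ← Real.exp_nat_mul, ← Real.rpow_natCast ((0.79:ℝ) ^ (0.441:ℝ)) 1000,
    ← Real.rpow_mul (by norm_num : (0:ℝ) ≤ 0.79)]
  norm_num
  rw [Real.exp_neg, inv_mul_eq_div, le_div_iff₀ (Real.exp_pos _)]
  refine le_trans (mul_le_mul_of_nonneg_left aux_num1 (by positivity)) (by
    rw [show (1000:ℕ) = 250 * 4 from rfl, show (441:ℕ) = 147 * 3 from rfl, pow_mul, pow_mul]; norm_num)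

lemma aux_baseY : (0.9375:ℝ) ≤ Real.exp (-(1/145)) * (0.75:ℝ) ^ (0.2:ℝ) := by
  have hr : (0:ℝ) ≤ (0.75:ℝ) ^ (0.2:ℝ) := Real.rpow_nonneg (by norm_num) _
  have hrhs : (0:ℝ) ≤ Real.exp (-(1/145)) * (0.75:ℝ) ^ (0.2:ℝ) :=
    mul_nonneg (Real.exp_pos _).le hr
  refine (pow_le_pow_iff_left₀ (by norm_num) hrhs (by norm_num : (5:ℕ) ≠ 0)).mp ?_
  rw [mul_pow, ← Real.exp_nat_mul, ← Real.rpow_natCast ((0.75:ℝ) ^ (0.2:ℝ)) 5,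
    ← Real.rpow_mul (by norm_num : (0:ℝ) ≤ 0.75)]
  norm_num
  rw [Real.exp_neg, inv_mul_eq_div, le_div_iff₀ (Real.exp_pos _)]
  refine le_trans (mul_le_mul_of_nonneg_left aux_num2 (by positivity)) (by norm_num)

lemma aux_keyX (T : ℕ) : ((0.895:ℝ)) ^ T
    ≤ Real.exp (-(T:ℝ)/145) * (0.79:ℝ) ^ ((0.441:ℝ) * (T:ℝ)) := by
  have e1 : Real.exp (-(T:ℝ)/145) = Real.exp (-(1/145)) ^ T := by
    rw [← Real.exp_nat_mul]; congr 1; ring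
  have e2 : (0.79:ℝ) ^ ((0.441:ℝ) * (T:ℝ)) = ((0.79:ℝ) ^ (0.441:ℝ)) ^ T := by
    rw [Real.rpow_mul (by norm_num : (0:ℝ) ≤ 0.79), Real.rpow_natCast]
  rw [e1, e2, ← mul_pow]
  exact pow_le_pow_left₀ (by norm_num) aux_baseX T

lemma aux_keyY (T : ℕ) : ((0.9375:ℝ)) ^ T
    ≤ Real.exp (-(T:ℝ)/145) * (0.75:ℝ) ^ ((0.2:ℝ) * (T:ℝ)) := by
  have e1 : Real.exp (-(T:ℝ)/145) = Real.exp (-(1/145)) ^ T := by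
    rw [← Real.exp_nat_mul]; congr 1; ring
  have e2 : (0.75:ℝ) ^ ((0.2:ℝ) * (T:ℝ)) = ((0.75:ℝ) ^ (0.2:ℝ)) ^ T := by
    rw [Real.rpow_mul (by norm_num : (0:ℝ) ≤ 0.75), Real.rpow_natCast]
  rw [e1, e2, ← mul_pow]
  exact pow_le_pow_left₀ (by norm_num) aux_baseY T

/-! ### Counting lemmas -/

lemma aux_card_mem_filter {N : ℕ} (hN : 1 ≤ N) (a : Fin N) :
    (univ.filter (fun S : Finset (Fin N) => a ∈ S)).card = 2 ^ (N - 1) := by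
  have htog : (univ.filter (fun S : Finset (Fin N) => a ∈ S)).card
      = (univ.filter (fun S : Finset (Fin N) => ¬ a ∈ S)).card := by
    apply Finset.card_nbij' (fun S => S.erase a) (fun S => insert a S)
    · intro S hS; simp
    · intro S hS; simp
    · intro S hS
      simp only [mem_coe, mem_filter, mem_univ, true_and] at hS
      exact Finset.insert_erase hS
    · intro S hS
      simp only [mem_coe, mem_filter, mem_univ, true_and] at hS
      exact Finset.erase_insert hS
  have hsplit : (univ.filter (fun S : Finset (Fin N) => a ∈ S)).card
      + (univ.filter (fun S : Finset (Fin N) => ¬ a ∈ S)).card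
      = Fintype.card (Finset (Fin N)) :=
    Finset.card_filter_add_card_filter_not _
  rw [Fintype.card_finset, Fintype.card_fin] at hsplit
  have h2 : 2 ^ N = 2 * 2 ^ (N - 1) := by
    rw [← pow_succ']; congr 1; omega
  omega

lemma aux_card_pair_filter {N : ℕ} (hN : 2 ≤ N) (a b : Fin N) (hab : a ≠ b) :
    (univ.filter (fun S : Finset (Fin N) => a ∉ S ∧ b ∈ S)).card = 2 ^ (N - 2) := by
  have htog : (univ.filter (fun S : Finset (Fin N) => a ∈ S ∧ b ∈ S)).card
      = (univ.filter (fun S : Finset (Fin N) => a ∉ S ∧ b ∈ S)).card := by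
    apply Finset.card_nbij' (fun S => S.erase a) (fun S => insert a S)
    · intro S hS
      simp only [mem_coe, mem_filter, mem_univ, true_and] at hS ⊢
      exact ⟨by simp, Finset.mem_erase.mpr ⟨fun h => hab h.symm, hS.2⟩⟩
    · intro S hS
      simp only [mem_coe, mem_filter, mem_univ, true_and] at hS ⊢
      exact ⟨mem_insert_self a S, Finset.mem_insert_of_mem hS.2⟩
    · intro S hS
      simp only [mem_coe, mem_filter, mem_univ, true_and] at hS
      exact Finset.insert_erase hS.1
    · intro S hS
      simp only [mem_coe, mem_filter, mem_univ, true_and] at hS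
      exact Finset.erase_insert hS.1
  have hsplit : ((univ.filter (fun S : Finset (Fin N) => b ∈ S)).filter
        (fun S => a ∈ S)).card
      + ((univ.filter (fun S : Finset (Fin N) => b ∈ S)).filter
        (fun S => ¬ a ∈ S)).card
      = (univ.filter (fun S : Finset (Fin N) => b ∈ S)).card :=
    Finset.card_filter_add_card_filter_not _
  have e1 : (univ.filter (fun S : Finset (Fin N) => b ∈ S)).filter (fun S => a ∈ S)
      = univ.filter (fun S : Finset (Fin N) => a ∈ S ∧ b ∈ S) := by
    ext S; simp [and_comm]
  have e2 : (univ.filter (fun S : Finset (Fin N) => b ∈ S)).filter (fun S => ¬ a ∈ S)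
      = univ.filter (fun S : Finset (Fin N) => a ∉ S ∧ b ∈ S) := by
    ext S; simp [and_comm]
  rw [e1, e2, htog] at hsplit
  have hb : (univ.filter (fun S : Finset (Fin N) => b ∈ S)).card = 2 ^ (N - 1) :=
    aux_card_mem_filter (by omega) b
  rw [hb] at hsplit
  have h2 : 2 ^ (N-1) = 2 * 2 ^ (N - 2) := by
    rw [← pow_succ']; congr 1; omega
  omega

/-! ### Chernoff counting bound -/

set_option maxHeartbeats 1000000 in
lemma aux_chernoff_count {α : Type*} [Fintype α] [DecidableEq α] (Q : α → Prop)
    [DecidablePred Q] (T : ℕ) (r c : ℝ) (hr0 : 0 < r) (hr1 : r ≤ 1) :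
    ((univ.filter (fun ω : Fin T → α =>
          ((univ.filter (fun t => Q (ω t))).card : ℝ) < c)).card : ℝ) * r ^ c
      ≤ (((univ.filter Q).card : ℝ) * r + ((univ.filter (fun a => ¬ Q a)).card : ℝ)) ^ T := by
  have key : ∀ ω : Fin T → α,
      (∏ t, (if Q (ω t) then r else 1))
        = r ^ ((univ.filter (fun t => Q (ω t))).card : ℕ) := by
    intro ω
    rw [Finset.prod_ite]
    simp
  calc ((univ.filter (fun ω : Fin T → α =>
          ((univ.filter (fun t => Q (ω t))).card : ℝ) < c)).card : ℝ) * r ^ c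
      = ∑ ω ∈ univ.filter (fun ω : Fin T → α =>
          ((univ.filter (fun t => Q (ω t))).card : ℝ) < c), r ^ c := by
        rw [Finset.sum_const, nsmul_eq_mul]
    _ ≤ ∑ ω ∈ univ.filter (fun ω : Fin T → α =>
          ((univ.filter (fun t => Q (ω t))).card : ℝ) < c),
          r ^ (((univ.filter (fun t => Q (ω t))).card : ℝ)) := by
        apply Finset.sum_le_sum
        intro ω hω
        exact Real.rpow_le_rpow_of_exponent_ge hr0 hr1
          (le_of_lt (Finset.mem_filter.mp hω).2)
    _ ≤ ∑ ω : Fin T → α, r ^ (((univ.filter (fun t => Q (ω t))).card : ℝ)) :=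
        Finset.sum_le_sum_of_subset_of_nonneg (Finset.filter_subset _ _)
          (fun ω _ _ => Real.rpow_nonneg hr0.le _)
    _ = ∑ ω : Fin T → α, ∏ t, (if Q (ω t) then r else 1) := by
        refine Finset.sum_congr rfl (fun ω _ => ?_)
        rw [key ω, Real.rpow_natCast]
    _ = (∑ a : α, (if Q a then r else 1)) ^ T := by
        exact (Fintype.sum_pow (fun a => if Q a then r else 1) T).symm
    _ = (((univ.filter Q).card : ℝ) * r + ((univ.filter (fun a => ¬ Q a)).card : ℝ)) ^ T := by
        rw [Finset.sum_ite, Finset.sum_const, Finset.sum_const, nsmul_eq_mul, nsmul_eq_mul,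
          mul_one]

/-! ### Identification of the predicates -/

lemma aux_lmem_one_iff {N : ℕ} (hN : 3 ≤ N) (S : Finset (Fin N)) :
    lmem N 1 S ↔ (⟨0, by omega⟩ : Fin N) ∈ S := by
  constructor
  · rintro ⟨l, hl, hl1⟩
    have h0 : (l : ℕ) = 0 := by omega
    have : l = (⟨0, by omega⟩ : Fin N) := Fin.ext h0
    rwa [← this]
  · intro h
    exact ⟨_, h, rfl⟩

lemma aux_pred2_iff {N : ℕ} (hN : 3 ≤ N) (S : Finset (Fin N)) :
    (¬ lmem N 1 S ∧ choiceLabel S = 2)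
      ↔ ((⟨0, by omega⟩ : Fin N) ∉ S ∧ (⟨1, by omega⟩ : Fin N) ∈ S) := by
  rw [aux_lmem_one_iff hN]
  constructor
  · rintro ⟨h0, hc⟩
    refine ⟨h0, ?_⟩
    unfold choiceLabel at hc
    by_cases h : S.Nonempty
    · rw [dif_pos h] at hc
      have hmin : ((S.min' h : Fin N) : ℕ) = 1 := by omega
      have : S.min' h = (⟨1, by omega⟩ : Fin N) := Fin.ext hmin
      rw [← this]
      exact S.min'_mem h
    · rw [dif_neg h] at hc; omega
  · rintro ⟨h0, h1⟩
    have h : S.Nonempty := ⟨_, h1⟩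
    refine ⟨h0, ?_⟩
    unfold choiceLabel
    rw [dif_pos h]
    have hle : S.min' h ≤ (⟨1, by omega⟩ : Fin N) := S.min'_le _ h1
    have hne : ((S.min' h : Fin N) : ℕ) ≠ 0 := by
      intro hz
      have : S.min' h = (⟨0, by omega⟩ : Fin N) := Fin.ext hz
      exact h0 (this ▸ S.min'_mem h)
    have hle1 : ((S.min' h : Fin N) : ℕ) ≤ 1 := hle
    omega

/-! ### Deterministic bound -/

lemma aux_sum_bound {N T : ℕ} (hN : 3 ≤ N) (ω : Fin T → Finset (Fin N)) :
    ((nOutCh1 N T ω 2 : ℝ)) ^ 2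
      ≤ ∑ k ∈ (insert 0 (Finset.Icc 1 N)).erase 1, (nOutCh1 N T ω k : ℝ) ^ 2 := by
  apply Finset.single_le_sum (f := fun k => (nOutCh1 N T ω k : ℝ) ^ 2)
  · intro k _; positivity
  · simp only [Finset.mem_erase, Finset.mem_insert, Finset.mem_Icc]
    omega

lemma aux_sum_disj {N T : ℕ} (ω : Fin T → Finset (Fin N)) :
    nIn1 N T ω + nOutCh1 N T ω 2 ≤ T := by
  have h1 : nOutCh1 N T ω 2 ≤ (univ.filter (fun t => ¬ lmem N 1 (ω t))).card := by
    apply Finset.card_le_card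
    intro t ht
    simp only [Finset.mem_filter] at ht ⊢
    exact ⟨ht.1, ht.2.1⟩
  have h2 : nIn1 N T ω + (univ.filter (fun t => ¬ lmem N 1 (ω t))).card
      = Fintype.card (Fin T) :=
    Finset.card_filter_add_card_filter_not _
  rw [Fintype.card_fin] at h2
  omega

lemma aux_det_bound {N T : ℕ} (hN : 3 ≤ N) (ω : Fin T → Finset (Fin N))
    (hX : (0.441 : ℝ) * T ≤ nIn1 N T ω) (hY : (0.2 : ℝ) * T ≤ nOutCh1 N T ω 2) :
    0.512041 * (T : ℝ) ≤ H1 N T ω := by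
  rcases Nat.eq_zero_or_pos T with hT | hT
  · subst hT
    have hn : nIn1 N 0 ω = 0 := by simp [nIn1]
    have hs : ∀ k, nOutCh1 N 0 ω k = 0 := by intro k; simp [nOutCh1]
    simp [H1, hn, hs]
  · have ht : (0:ℝ) < T := by exact_mod_cast hT
    set x : ℝ := (nIn1 N T ω : ℝ) with hx
    set y : ℝ := (nOutCh1 N T ω 2 : ℝ) with hy
    have hxy : x + y ≤ (T:ℝ) := by
      have h0 := aux_sum_disj ω
      have h1 : ((nIn1 N T ω + nOutCh1 N T ω 2 : ℕ) : ℝ) ≤ (T:ℝ) := by exact_mod_cast h0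
      push_cast at h1
      linarith
    have hd : (0:ℝ) < (T:ℝ) - x := by linarith
    have hdiv : y^2 / ((T:ℝ) - x)
        ≤ (∑ k ∈ (insert 0 (Finset.Icc 1 N)).erase 1, (nOutCh1 N T ω k : ℝ) ^ 2)
          / ((T:ℝ) - x) := by
      gcongr
      exact aux_sum_bound hN ω
    have hkey : 0.512041 * (T:ℝ) ≤ x + y^2 / ((T:ℝ) - x) := by
      rw [← sub_le_iff_le_add']
      rw [le_div_iff₀ hd]
      nlinarith [mul_nonneg (sub_nonneg.2 hX)
          (by linarith : (0:ℝ) ≤ 0.630041*(T:ℝ) - (x - 0.441*T)),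
        sq_nonneg (y - 0.2*(T:ℝ)), mul_nonneg ht.le (sub_nonneg.2 hY)]
    unfold H1
    rw [← hx]
    calc 0.512041 * (T:ℝ) ≤ x + y^2 / ((T:ℝ) - x) := hkey
      _ ≤ _ := by linarith [hdiv]

/-! ### The two tail bounds -/

lemma aux_boundX {N : ℕ} (T : ℕ) (hN : 3 ≤ N) :
    ((univ.filter (fun ω : Fin T → Finset (Fin N) =>
        ((nIn1 N T ω : ℝ)) < 0.441 * (T:ℝ))).card : ℝ)
      ≤ Real.exp (-(T:ℝ)/145) * ((2:ℝ)^N)^T := by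
  have hq : (univ.filter (fun S : Finset (Fin N) => lmem N 1 S)).card = 2 ^ (N-1) := by
    have he : (univ.filter (fun S : Finset (Fin N) => lmem N 1 S))
        = univ.filter (fun S : Finset (Fin N) => (⟨0, by omega⟩ : Fin N) ∈ S) := by
      ext S; simp only [mem_filter, mem_univ, true_and]; exact aux_lmem_one_iff hN S
    rw [he, aux_card_mem_filter (by omega)]
  have hq' : (univ.filter (fun S : Finset (Fin N) => ¬ lmem N 1 S)).card = 2 ^ (N-1) := by
    have h2 : (univ.filter (fun S : Finset (Fin N) => lmem N 1 S)).card
        + (univ.filter (fun S : Finset (Fin N) => ¬ lmem N 1 S)).card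
        = Fintype.card (Finset (Fin N)) :=
      Finset.card_filter_add_card_filter_not _
    rw [Fintype.card_finset, Fintype.card_fin, hq] at h2
    have h3 : 2 ^ N = 2 * 2 ^ (N - 1) := by
      rw [← pow_succ']; congr 1; omega
    omega
  have hch := aux_chernoff_count (α := Finset (Fin N)) (lmem N 1) T 0.79 (0.441 * (T:ℝ))
    (by norm_num) (by norm_num)
  rw [hq, hq'] at hch
  have hchE : ((univ.filter (fun ω : Fin T → Finset (Fin N) =>
        ((nIn1 N T ω : ℝ)) < 0.441 * (T:ℝ))).card : ℝ) * (0.79:ℝ) ^ ((0.441:ℝ) * (T:ℝ))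
      ≤ (((2^(N-1) : ℕ) : ℝ) * 0.79 + ((2^(N-1) : ℕ) : ℝ)) ^ T := hch
  have hR : (0:ℝ) < (0.79:ℝ) ^ ((0.441:ℝ) * (T:ℝ)) := Real.rpow_pos_of_pos (by norm_num) _
  rw [← mul_le_mul_iff_of_pos_right hR]
  refine hchE.trans ?_
  have hrw : (((2^(N-1) : ℕ) : ℝ) * 0.79 + ((2^(N-1) : ℕ) : ℝ))
      = (2:ℝ)^(N-1) * (2 * 0.895) := by
    push_cast; ring
  have h2N : ((2:ℝ)^N) = (2:ℝ)^(N-1) * 2 := by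
    rw [← pow_succ]; congr 1; omega
  rw [hrw, h2N]
  calc ((2:ℝ)^(N-1) * (2 * 0.895)) ^ T
      = ((2:ℝ)^(N-1) * 2) ^ T * (0.895:ℝ) ^ T := by rw [← mul_pow]; ring_nf
    _ ≤ ((2:ℝ)^(N-1) * 2) ^ T
        * (Real.exp (-(T:ℝ)/145) * (0.79:ℝ) ^ ((0.441:ℝ) * (T:ℝ))) := by
        exact mul_le_mul_of_nonneg_left (aux_keyX T) (by positivity)
    _ = Real.exp (-(T:ℝ)/145) * ((2:ℝ)^(N-1) * 2) ^ T * (0.79:ℝ) ^ ((0.441:ℝ) * (T:ℝ)) := by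
        ring

lemma aux_boundY {N : ℕ} (T : ℕ) (hN : 3 ≤ N) :
    ((univ.filter (fun ω : Fin T → Finset (Fin N) =>
        ((nOutCh1 N T ω 2 : ℝ)) < 0.2 * (T:ℝ))).card : ℝ)
      ≤ Real.exp (-(T:ℝ)/145) * ((2:ℝ)^N)^T := by
  have hab : (⟨0, by omega⟩ : Fin N) ≠ (⟨1, by omega⟩ : Fin N) := by
    intro h
    have h' := congrArg Fin.val h
    simp at h'
  have hq : (univ.filter (fun S : Finset (Fin N) =>
      ¬ lmem N 1 S ∧ choiceLabel S = 2)).card = 2 ^ (N-2) := by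
    have he : (univ.filter (fun S : Finset (Fin N) => ¬ lmem N 1 S ∧ choiceLabel S = 2))
        = univ.filter (fun S : Finset (Fin N) =>
            (⟨0, by omega⟩ : Fin N) ∉ S ∧ (⟨1, by omega⟩ : Fin N) ∈ S) := by
      ext S; simp only [mem_filter, mem_univ, true_and]; exact aux_pred2_iff hN S
    rw [he, aux_card_pair_filter (by omega) _ _ hab]
  have hq' : (univ.filter (fun S : Finset (Fin N) =>
      ¬ (¬ lmem N 1 S ∧ choiceLabel S = 2))).card = 3 * 2 ^ (N-2) := by
    have h2 : (univ.filter (fun S : Finset (Fin N) => ¬ lmem N 1 S ∧ choiceLabel S = 2)).card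
        + (univ.filter (fun S : Finset (Fin N) =>
            ¬ (¬ lmem N 1 S ∧ choiceLabel S = 2))).card
        = Fintype.card (Finset (Fin N)) :=
      Finset.card_filter_add_card_filter_not _
    rw [Fintype.card_finset, Fintype.card_fin, hq] at h2
    have h3 : 2 ^ N = 4 * 2 ^ (N - 2) := by
      rw [show (4:ℕ) = 2^2 by norm_num, ← pow_add]; congr 1; omega
    omega
  have hch := aux_chernoff_count (α := Finset (Fin N))
    (fun S => ¬ lmem N 1 S ∧ choiceLabel S = 2) T 0.75 (0.2 * (T:ℝ))
    (by norm_num) (by norm_num)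
  rw [hq, hq'] at hch
  have hchE : ((univ.filter (fun ω : Fin T → Finset (Fin N) =>
        ((nOutCh1 N T ω 2 : ℝ)) < 0.2 * (T:ℝ))).card : ℝ) * (0.75:ℝ) ^ ((0.2:ℝ) * (T:ℝ))
      ≤ (((2^(N-2) : ℕ) : ℝ) * 0.75 + ((3 * 2^(N-2) : ℕ) : ℝ)) ^ T := hch
  have hR : (0:ℝ) < (0.75:ℝ) ^ ((0.2:ℝ) * (T:ℝ)) := Real.rpow_pos_of_pos (by norm_num) _
  rw [← mul_le_mul_iff_of_pos_right hR]
  refine hchE.trans ?_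
  have hrw : (((2^(N-2) : ℕ) : ℝ) * 0.75 + ((3 * 2^(N-2) : ℕ) : ℝ))
      = (2:ℝ)^(N-2) * (4 * 0.9375) := by
    push_cast; ring
  have h2N : ((2:ℝ)^N) = (2:ℝ)^(N-2) * 4 := by
    rw [show (4:ℝ) = 2^2 by norm_num, ← pow_add]; congr 1; omega
  rw [hrw, h2N]
  calc ((2:ℝ)^(N-2) * (4 * 0.9375)) ^ T
      = ((2:ℝ)^(N-2) * 4) ^ T * (0.9375:ℝ) ^ T := by rw [← mul_pow]; ring_nf
    _ ≤ ((2:ℝ)^(N-2) * 4) ^ T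
        * (Real.exp (-(T:ℝ)/145) * (0.75:ℝ) ^ ((0.2:ℝ) * (T:ℝ))) := by
        exact mul_le_mul_of_nonneg_left (aux_keyY T) (by positivity)
    _ = Real.exp (-(T:ℝ)/145) * ((2:ℝ)^(N-2) * 4) ^ T * (0.75:ℝ) ^ ((0.2:ℝ) * (T:ℝ)) := by
        ring

/-- Single-ranking setup with `N ≥ 3` products: every customer prefers `1 ≻ 2 ≻ ⋯ ≻ N ≻ 0`,
and the `T` training assortments are i.i.d. uniform over all `2^N` subsets of `[N]`.  Then
`P( H_1 < 0.512041·T ) < 4·exp(-T/145)`. -/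
theorem H1_lower_tail (N T : ℕ) (hN : 3 ≤ N) :
    (((Finset.univ : Finset (Fin T → Finset (Fin N))).filter
        (fun ω => H1 N T ω < 0.512041 * (T : ℝ))).card : ℝ) / ((2 ^ N : ℝ) ^ T)
      < 4 * Real.exp (-(T : ℝ) / 145) := by
  have hsub : (Finset.univ : Finset (Fin T → Finset (Fin N))).filter
        (fun ω => H1 N T ω < 0.512041 * (T : ℝ))
      ⊆ (univ.filter (fun ω : Fin T → Finset (Fin N) =>
          ((nIn1 N T ω : ℝ)) < 0.441 * (T:ℝ)))
        ∪ (univ.filter (fun ω : Fin T → Finset (Fin N) =>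
          ((nOutCh1 N T ω 2 : ℝ)) < 0.2 * (T:ℝ))) := by
    intro ω hω
    simp only [mem_filter, mem_univ, true_and, mem_union] at hω ⊢
    by_contra hc
    push_neg at hc
    exact absurd hω (not_lt.2 (aux_det_bound hN ω hc.1 hc.2))
  have hcard : ((Finset.univ : Finset (Fin T → Finset (Fin N))).filter
        (fun ω => H1 N T ω < 0.512041 * (T : ℝ))).card
      ≤ (univ.filter (fun ω : Fin T → Finset (Fin N) =>
          ((nIn1 N T ω : ℝ)) < 0.441 * (T:ℝ))).card
        + (univ.filter (fun ω : Fin T → Finset (Fin N) =>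
          ((nOutCh1 N T ω 2 : ℝ)) < 0.2 * (T:ℝ))).card :=
    (Finset.card_le_card hsub).trans (Finset.card_union_le _ _)
  have hX := aux_boundX (N := N) T hN
  have hY := aux_boundY (N := N) T hN
  have hpow : (0:ℝ) < ((2:ℝ)^N)^T := by positivity
  have hexp : (0:ℝ) < Real.exp (-(T:ℝ)/145) := Real.exp_pos _
  rw [div_lt_iff₀ hpow]
  have hc2 : (((Finset.univ : Finset (Fin T → Finset (Fin N))).filter
        (fun ω => H1 N T ω < 0.512041 * (T : ℝ))).card : ℝ)
      ≤ 2 * (Real.exp (-(T:ℝ)/145) * ((2:ℝ)^N)^T) := by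
    have : (((Finset.univ : Finset (Fin T → Finset (Fin N))).filter
        (fun ω => H1 N T ω < 0.512041 * (T : ℝ))).card : ℝ)
        ≤ ((univ.filter (fun ω : Fin T → Finset (Fin N) =>
            ((nIn1 N T ω : ℝ)) < 0.441 * (T:ℝ))).card : ℝ)
          + ((univ.filter (fun ω : Fin T → Finset (Fin N) =>
            ((nOutCh1 N T ω 2 : ℝ)) < 0.2 * (T:ℝ))).card : ℝ) := by
      exact_mod_cast hcard
    linarith
  calc (((Finset.univ : Finset (Fin T → Finset (Fin N))).filter
        (fun ω => H1 N T ω < 0.512041 * (T : ℝ))).card : ℝ)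
      ≤ 2 * (Real.exp (-(T:ℝ)/145) * ((2:ℝ)^N)^T) := hc2
    _ < 4 * Real.exp (-(T:ℝ)/145) * ((2:ℝ)^N)^T := by nlinarith
    _ = 4 * Real.exp (-(T:ℝ)/145) * ((2^N : ℝ))^T := by norm_num

end
end
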